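/- Let X be a proper geodesic δ-hyperbolic space. Let ε, ε' > 0 and b, b' ∈ 𝔅̂(X) be such that X is K-roughly starlike from the basepoints of both b and b', and both ρ_{ε,b} and ρ_{ε',b'} are GH-densities with the same constant M. Then the homeomorphism X_{ε,b} → X_{ε',b'} induced by the identity map on X is ∂-biLipschitz with data (L,λ) depending only on δ, K, ε, ε', M, and is η-quasimöbius with η(t) = C·max{t^{ε'/ε}, t^{ε/ε'}}, where C depends only on δ, K, ε, ε', M. -/

import Mathlib

open Metric Set Filter Topology
open scoped ENNReal Classical

noncomputable section

namespace Paper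

variable {X Y : Type*}

/-- The distance function of a metric space. -/
def distFun (X : Type*) [MetricSpace X] : X → X → ℝ := fun p q => dist p q

/-- `e` is a genuine metric distance function. -/
def IsMetricDist (e : X → X → ℝ) : Prop :=
  (∀ x, e x x = 0) ∧ (∀ x y, x ≠ y → 0 < e x y) ∧ (∀ x y, e x y = e y x) ∧
    ∀ x y z, e x z ≤ e x y + e y z

/-- Cauchy sequence with respect to the distance function `e`. -/
def CauchyWrt (e : X → X → ℝ) (u : ℕ → X) : Prop :=
  ∀ δ : ℝ, 0 < δ → ∃ N : ℕ, ∀ m, N ≤ m → ∀ n, N ≤ n → e (u m) (u n) < δ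

/-- The sequence converges, w.r.t. `e`, to a point of the space. -/
def ConvWrt (e : X → X → ℝ) (u : ℕ → X) : Prop :=
  ∃ y : X, Tendsto (fun n => e (u n) y) atTop (𝓝 0)

/-- The space is incomplete with respect to `e`:
some Cauchy sequence does not converge in the space. -/
def IncompleteWrt (e : X → X → ℝ) : Prop :=
  ∃ u : ℕ → X, CauchyWrt e u ∧ ¬ ConvWrt e u

/-- Distance from `x` to the metric boundary (the completion minus the space),
measured w.r.t. `e`: the infimum of the limits `lim_n e x (u n)` over all Cauchy
sequences `u` that have no limit in the space. -/
def bdryDistWrt (e : X → X → ℝ) (x : X) : ℝ :=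
  sInf { r : ℝ | ∃ u : ℕ → X, CauchyWrt e u ∧ ¬ ConvWrt e u ∧
    Tendsto (fun n => e x (u n)) atTop (𝓝 r) }

/-- Sequential compactness of a set w.r.t. `e`. -/
def SeqCompactWrt (e : X → X → ℝ) (s : Set X) : Prop :=
  ∀ u : ℕ → X, (∀ n, u n ∈ s) → ∃ y ∈ s, ∃ φ : ℕ → ℕ, StrictMono φ ∧
    Tendsto (fun n => e (u (φ n)) y) atTop (𝓝 0)

/-- Local compactness w.r.t. `e`: every point has arbitrarily small compact closed balls. -/
def LocallyCompactWrt (e : X → X → ℝ) : Prop :=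
  ∀ x : X, ∀ r : ℝ, 0 < r → ∃ r' : ℝ, 0 < r' ∧ r' ≤ r ∧ SeqCompactWrt e { y | e x y ≤ r' }

/-- Continuity of a curve on a set of parameters, w.r.t. `e`. -/
def ContinuousOnWrt (e : X → X → ℝ) (γ : ℝ → X) (I : Set ℝ) : Prop :=
  ∀ t ∈ I, ∀ δ : ℝ, 0 < δ → ∃ η : ℝ, 0 < η ∧ ∀ s ∈ I, |s - t| < η → e (γ s) (γ t) < δ

/-- The length (total variation) of the curve `γ` on the parameter set `I`, w.r.t. `e`. -/
def varOn (e : X → X → ℝ) (γ : ℝ → X) (I : Set ℝ) : ℝ≥0∞ :=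
  ⨆ p : ℕ × { u : ℕ → ℝ // Monotone u ∧ ∀ i, u i ∈ I },
    ∑ i ∈ Finset.range p.1, ENNReal.ofReal (e (γ (p.2.1 (i + 1))) (γ (p.2.1 i)))

/-- `X` with distance `e` is an `A`-uniform metric space: it is a locally compact,
incomplete metric space any two of whose points are joined by an `A`-uniform curve. -/
def IsUniformSpcWrt (e : X → X → ℝ) (A : ℝ) : Prop :=
  IsMetricDist e ∧ LocallyCompactWrt e ∧ IncompleteWrt e ∧
  ∀ x y : X, ∃ (a b : ℝ) (γ : ℝ → X), a ≤ b ∧ ContinuousOnWrt e γ (Icc a b) ∧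
    γ a = x ∧ γ b = y ∧
    varOn e γ (Icc a b) ≤ ENNReal.ofReal (A * e x y) ∧
    ∀ t ∈ Icc a b, min (varOn e γ (Icc a t)) (varOn e γ (Icc t b)) ≤
      ENNReal.ofReal (A * bdryDistWrt e (γ t))

/-- `f` is `∂`-Lipschitz with data `(L, lam)`. -/
def PartialLipschitzWrt (e : X → X → ℝ) (e' : Y → Y → ℝ) (L lam : ℝ) (f : X → Y) : Prop :=
  ∀ x y z : X, e y x < lam * bdryDistWrt e x → e z x < lam * bdryDistWrt e x →
    e' (f y) (f z) / bdryDistWrt e' (f x) ≤ L * (e y z / bdryDistWrt e x)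

/-- `f` (with inverse `g`) is `∂`-biLipschitz with data `(L, lam)`. -/
def PartialBiLipschitzWrt (e : X → X → ℝ) (e' : Y → Y → ℝ) (L lam : ℝ)
    (f : X → Y) (g : Y → X) : Prop :=
  1 ≤ L ∧ Function.LeftInverse g f ∧ Function.RightInverse g f ∧
    PartialLipschitzWrt e e' L lam f ∧ PartialLipschitzWrt e' e L lam g

/-- Cross-ratio of a quadruple of points, w.r.t. `e`. -/
def crossRatioWrt (e : X → X → ℝ) (x y z w : X) : ℝ := e x z * e y w / (e x y * e z w)

/-- `f` is `η`-quasimöbius. -/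
def QuasiMobiusWrt (e : X → X → ℝ) (e' : Y → Y → ℝ) (η : ℝ → ℝ) (f : X → Y) : Prop :=
  ∀ x y z w : X, x ≠ y → x ≠ z → x ≠ w → y ≠ z → y ≠ w → z ≠ w →
    crossRatioWrt e' (f x) (f y) (f z) (f w) ≤ η (crossRatioWrt e x y z w)

/-- `f` is `η`-quasisymmetric. -/
def QuasiSymmetricWrt (e : X → X → ℝ) (e' : Y → Y → ℝ) (η : ℝ → ℝ) (f : X → Y) : Prop :=
  ∀ x y z : X, ∀ t : ℝ, 0 ≤ t → e x y ≤ t * e x z → e' (f x) (f y) ≤ η t * e' (f x) (f z)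

/-- `η` is (the restriction to `[0,∞)` of) a self-homeomorphism of `[0,∞)`:
continuous, strictly increasing, fixing `0`, and tending to `∞`. -/
def IsControlFun (η : ℝ → ℝ) : Prop :=
  ContinuousOn η (Ici 0) ∧ StrictMonoOn η (Ici 0) ∧ η 0 = 0 ∧ Tendsto η atTop atTop

/-- The conformal deformation distance with conformal factor `ρ`: the infimum of
`∫ ρ ∘ γ` over all `1`-Lipschitz (w.r.t. `e`) curves joining `x` to `y`
(equivalently, the infimum of `∫_γ ρ ds` over all rectifiable curves joining `x` to `y`). -/
def confDistWrt (e : X → X → ℝ) (ρ : X → ℝ) (x y : X) : ℝ :=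
  sInf { l : ℝ | ∃ (T : ℝ) (γ : ℝ → X), 0 ≤ T ∧
    (∀ s ∈ Icc 0 T, ∀ t ∈ Icc 0 T, e (γ s) (γ t) ≤ |s - t|) ∧
    γ 0 = x ∧ γ T = y ∧ l = ∫ t in (0:ℝ)..T, ρ (γ t) }

/-- The quasihyperbolic metric of the space with distance `e`. -/
def quasiHypWrt (e : X → X → ℝ) : X → X → ℝ :=
  confDistWrt e fun z => (bdryDistWrt e z)⁻¹

/-- `γ` is a geodesic segment from `x` to `y`, parametrized by arclength on `[0, e x y]`. -/
def IsGeodesicSegWrt (e : X → X → ℝ) (γ : ℝ → X) (x y : X) : Prop :=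
  γ 0 = x ∧ γ (e x y) = y ∧
    ∀ s ∈ Icc 0 (e x y), ∀ t ∈ Icc 0 (e x y), e (γ s) (γ t) = |s - t|

/-- Any two points are joined by a geodesic. -/
def GeodesicSpaceWrt (e : X → X → ℝ) : Prop := ∀ x y : X, ∃ γ : ℝ → X, IsGeodesicSegWrt e γ x y

/-- The image of a geodesic segment. -/
def segImageWrt (e : X → X → ℝ) (γ : ℝ → X) (x y : X) : Set X := γ '' Icc 0 (e x y)

/-- `δ`-hyperbolicity: every geodesic triangle is `δ`-thin. -/
def DeltaHyperbolicWrt (e : X → X → ℝ) (δ : ℝ) : Prop :=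
  ∀ (x y z : X) (γ₁ γ₂ γ₃ : ℝ → X),
    IsGeodesicSegWrt e γ₁ x y → IsGeodesicSegWrt e γ₂ y z → IsGeodesicSegWrt e γ₃ z x →
    (∀ p ∈ segImageWrt e γ₁ x y, ∃ q ∈ segImageWrt e γ₂ y z ∪ segImageWrt e γ₃ z x, e p q ≤ δ) ∧
    (∀ p ∈ segImageWrt e γ₂ y z, ∃ q ∈ segImageWrt e γ₁ x y ∪ segImageWrt e γ₃ z x, e p q ≤ δ) ∧
    (∀ p ∈ segImageWrt e γ₃ z x, ∃ q ∈ segImageWrt e γ₁ x y ∪ segImageWrt e γ₂ y z, e p q ≤ δ)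

/-- `γ` is a geodesic ray (defined on `[0,∞)`). -/
def IsGeodesicRayWrt (e : X → X → ℝ) (γ : ℝ → X) : Prop :=
  ∀ s ∈ Ici (0:ℝ), ∀ t ∈ Ici (0:ℝ), e (γ s) (γ t) = |s - t|

/-- `γ` is a geodesic line. -/
def IsGeodesicLineWrt (e : X → X → ℝ) (γ : ℝ → X) : Prop :=
  ∀ s t : ℝ, e (γ s) (γ t) = |s - t|

/-- Two rays are at bounded distance from each other (represent the same
point of the Gromov boundary). -/
def RayEquivWrt (e : X → X → ℝ) (γ σ : ℝ → X) : Prop :=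
  ∃ c : ℝ, ∀ t ∈ Ici (0:ℝ), e (γ t) (σ t) ≤ c

/-- The infimal distance from `x` to the set `s`, w.r.t. `e`. -/
def infDistWrt (e : X → X → ℝ) (x : X) (s : Set X) : ℝ := sInf (e x '' s)

/-- `X` is `K`-roughly starlike from the point `z`. -/
def RoughStarlikeFromPointWrt (e : X → X → ℝ) (K : ℝ) (z : X) : Prop :=
  ∀ x : X, ∃ γ : ℝ → X, IsGeodesicRayWrt e γ ∧ γ 0 = z ∧ infDistWrt e x (γ '' Ici 0) ≤ K

/-- `X` is `K`-roughly starlike from the Gromov boundary point represented by the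
geodesic ray `ρ`: every point lies within distance `K` of a geodesic line starting
from that boundary point. -/
def RoughStarlikeFromRayWrt (e : X → X → ℝ) (K : ℝ) (ρ : ℝ → X) : Prop :=
  ∀ x : X, ∃ γ : ℝ → X, IsGeodesicLineWrt e γ ∧ RayEquivWrt e (fun t => γ (-t)) ρ ∧
    infDistWrt e x (range γ) ≤ K

/-- The Busemann function of the geodesic ray `ρ`:
`b_ρ(x) = lim_{t→∞} (e (ρ t) x - t) = inf_{t ≥ 0} (e (ρ t) x - t)`. -/
def busemannWrt (e : X → X → ℝ) (ρ : ℝ → X) (x : X) : ℝ :=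
  sInf ((fun t => e (ρ t) x - t) '' Ici 0)

/-- `b ∈ 𝔅̂(X)` (either a translated distance function or a translated Busemann
function), and `X` is `K`-roughly starlike from the basepoint of `b`. -/
def BhatStarlike (e : X → X → ℝ) (K : ℝ) (b : X → ℝ) : Prop :=
  (∃ (z : X) (s : ℝ), (∀ x, b x = e x z + s) ∧ RoughStarlikeFromPointWrt e K z) ∨
  (∃ (ρ : ℝ → X) (s : ℝ), IsGeodesicRayWrt e ρ ∧ (∀ x, b x = busemannWrt e ρ x + s) ∧
    RoughStarlikeFromRayWrt e K ρ)

/-- `ρ` is a Gehring–Hayman density with constant `M`: the `ρ`-length of any geodesic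
is at most `M` times the conformal distance between its endpoints. -/
def IsGHDensityWrt (e : X → X → ℝ) (M : ℝ) (ρ : X → ℝ) : Prop :=
  ∀ (x y : X) (γ : ℝ → X), IsGeodesicSegWrt e γ x y →
    (∫ t in (0:ℝ)..(e x y), ρ (γ t)) ≤ M * confDistWrt e ρ x y

/-- The density `ρ_{ε,b}(x) = e^{-ε b(x)}`. -/
def uniformizationDensity (b : X → ℝ) (ε : ℝ) : X → ℝ := fun x => Real.exp (-ε * b x)

/-- The Gromov product of `x` and `y` based at `z`. -/
def gromovProdWrt (e : X → X → ℝ) (z x y : X) : ℝ := (e x z + e y z - e x y) / 2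

/-- The sequence `u` represents the Gromov boundary point of the geodesic ray `ρ`
(with respect to the basepoint `z`). -/
def SeqRepWrt (e : X → X → ℝ) (z : X) (ρ : ℝ → X) (u : ℕ → X) : Prop :=
  Tendsto (fun n => gromovProdWrt e z (u n) (ρ n)) atTop atTop

/-- The Gromov product, based at `z`, of the two boundary points represented by the
geodesic rays `ρ` and `σ` (valued in `[0,∞]`). -/
def bGromovProdWrt (e : X → X → ℝ) (z : X) (ρ σ : ℝ → X) : ℝ≥0∞ :=
  ⨅ (u : { u : ℕ → X // SeqRepWrt e z ρ u }) (v : { v : ℕ → X // SeqRepWrt e z σ v }),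
    Filter.liminf (fun n => ENNReal.ofReal (gromovProdWrt e z (u.1 n) (v.1 n))) atTop

/-- `S(x) = sup_{ω ∈ ∂X} inf_{ξ ∈ ∂X} (ω|ξ)_x`. -/
def Sfun (e : X → X → ℝ) (x : X) : ℝ≥0∞ :=
  ⨆ (ω : { ρ : ℝ → X // IsGeodesicRayWrt e ρ }),
    ⨅ (ξ : { ρ : ℝ → X // IsGeodesicRayWrt e ρ }), bGromovProdWrt e x ω.1 ξ.1

/-- The filter at the left end of the interval `I`. -/
def leftEndFilter (I : Set ℝ) : Filter ℝ :=
  if BddBelow I then 𝓝[I] (sInf I) else atBot ⊓ 𝓟 I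

/-- The filter at the right end of the interval `I`. -/
def rightEndFilter (I : Set ℝ) : Filter ℝ :=
  if BddAbove I then 𝓝[I] (sSup I) else atTop ⊓ 𝓟 I

/-- `γ : I → Ω` is an `A`-uniform curve: it is rectifiable with endpoints
`γ₋, γ₊` in the completion `Ω̄` satisfying `ℓ(γ) ≤ A d(γ₋,γ₊)` (or non-rectifiable with
`d(γ(s),γ(t)) → ∞` towards the endpoints of `I`), and at every time `t` the shorter of
the two subcurves has length at most `A d_Ω(γ(t))`. -/
def IsUniformCurve {Ω : Type*} [MetricSpace Ω] (A : ℝ) (γ : ℝ → Ω) (I : Set ℝ) : Prop :=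
  I.Nonempty ∧ I.OrdConnected ∧ ContinuousOn γ I ∧
  ((varOn (distFun Ω) γ I ≠ ⊤ ∧
     ∃ gm gp : UniformSpace.Completion Ω,
       Tendsto (fun t => (γ t : UniformSpace.Completion Ω)) (leftEndFilter I) (𝓝 gm) ∧
       Tendsto (fun t => (γ t : UniformSpace.Completion Ω)) (rightEndFilter I) (𝓝 gp) ∧
       varOn (distFun Ω) γ I ≤ ENNReal.ofReal (A * dist gm gp)) ∨
   (varOn (distFun Ω) γ I = ⊤ ∧
     Tendsto (fun pq : ℝ × ℝ => dist (γ pq.1) (γ pq.2))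
       (leftEndFilter I ×ˢ rightEndFilter I) atTop)) ∧
  ∀ t ∈ I, min (varOn (distFun Ω) γ (I ∩ Iic t)) (varOn (distFun Ω) γ (I ∩ Ici t)) ≤
    ENNReal.ofReal (A * bdryDistWrt (distFun Ω) (γ t))


/-!
Write `(x|y)_b = (b x + b y - d(x,y)) / 2`. Every `b ∈ 𝔅̂(X)` is `1`-Lipschitz, drops to within
`2δ` of `(x|y)_b` somewhere on every geodesic `[x,y]` (thin triangles), and grows at unit rate, up
to `2δ`, along a ray starting near any given point (rough starlikeness). Integrating `e^{-εb}`
along geodesics, with the Gehring–Hayman property for the lower bound, gives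
`d_{ε,b}(x,y) ≍ min(1, ε d(x,y)) e^{-ε (x|y)_b} / ε`; the escape rays and properness give
`d_{ε,b}(x) ≍ e^{-ε b(x)} / ε`, all constants depending only on `δ, K, ε, M`.

On `B(x, λ d_{ε,b}(x))` with `λ` small one has `ε d(x, ·) ≤ 1/4`, so there both
`d_{ε,b}(y,z) / d_{ε,b}(x)` and `d_{ε',b'}(y,z) / d_{ε',b'}(x)` are comparable to `d(y,z)`.
In a cross-ratio the values of `b` cancel: `log [x,y,z,w]` is, up to a bounded error,
`ε D / 2 + Σ ± log min(1, ε d(·,·))` with `D = d(x,z) + d(y,w) - d(x,y) - d(z,w)`. When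
`|ε D| > 2` the logarithmic terms have the sign of `D`, and this bounds the exponent for `ε'` by a
constant plus `ε'/ε` or `ε/ε'` times the exponent for `ε`.
-/

section Curves

variable [MetricSpace X]

@[simp] lemma distFun_apply (x y : X) : distFun X x y = dist x y := rfl

lemma lipschitzOnWith_one_iff {γ : ℝ → X} {I : Set ℝ} :
    LipschitzOnWith 1 γ I ↔ ∀ s ∈ I, ∀ t ∈ I, distFun X (γ s) (γ t) ≤ |s - t| := by
  simp only [lipschitzOnWith_iff_dist_le_mul, NNReal.coe_one, one_mul, distFun_apply,
    Real.dist_eq]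

lemma _root_.LipschitzOnWith.Icc_union {γ : ℝ → X} {a b c : ℝ} (hab : a ≤ b) (hbc : b ≤ c)
    (h₁ : LipschitzOnWith 1 γ (Icc a b)) (h₂ : LipschitzOnWith 1 γ (Icc b c)) :
    LipschitzOnWith 1 γ (Icc a c) := by
  have key : ∀ s ∈ Icc a c, ∀ t ∈ Icc a c, s ≤ t → dist (γ s) (γ t) ≤ t - s := by
    intro s hs t ht hst
    have hd₁ := (lipschitzOnWith_one_iff.1 h₁)
    have hd₂ := (lipschitzOnWith_one_iff.1 h₂)
    simp only [distFun_apply] at hd₁ hd₂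
    rcases le_total t b with htb | hbt
    · simpa [abs_of_nonpos (sub_nonpos.2 hst)] using
        hd₁ s ⟨hs.1, hst.trans htb⟩ t ⟨hs.1.trans hst, htb⟩
    rcases le_total s b with hsb | hbs
    · calc dist (γ s) (γ t) ≤ dist (γ s) (γ b) + dist (γ b) (γ t) := dist_triangle _ _ _
        _ ≤ |s - b| + |b - t| := add_le_add (hd₁ s ⟨hs.1, hsb⟩ b ⟨hab, le_rfl⟩)
            (hd₂ b ⟨le_rfl, hbc⟩ t ⟨hbt, ht.2⟩)
        _ = t - s := by rw [abs_of_nonpos (by linarith), abs_of_nonpos (by linarith)]; ring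
    · simpa [abs_of_nonpos (sub_nonpos.2 hst)] using hd₂ s ⟨hbs, hs.2⟩ t ⟨hbt, ht.2⟩
  refine lipschitzOnWith_one_iff.2 fun s hs t ht => ?_
  rcases le_total s t with hst | hts
  · simpa [abs_of_nonpos (sub_nonpos.2 hst)] using key s hs t ht hst
  · simpa [dist_comm, abs_of_nonneg (sub_nonneg.2 hts)] using key t ht s hs hts

lemma _root_.LipschitzOnWith.congr {α β : Type*} [PseudoEMetricSpace α] [PseudoEMetricSpace β]
    {K : NNReal} {f g : α → β} {s : Set α} (hf : LipschitzOnWith K f s) (h : EqOn f g s) :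
    LipschitzOnWith K g s := fun x hx y hy => by
  rw [← h hx, ← h hy]
  exact hf hx hy

lemma _root_.LipschitzOnWith.comp_sub_const {γ : ℝ → X} {T : ℝ}
    (hγ : LipschitzOnWith 1 γ (Icc 0 T)) (a : ℝ) :
    LipschitzOnWith 1 (fun t => γ (t - a)) (Icc a (a + T)) :=
  lipschitzOnWith_one_iff.2 fun s hs t ht => by
    simpa using lipschitzOnWith_one_iff.1 hγ (s - a) ⟨by linarith [hs.1], by linarith [hs.2]⟩
      (t - a) ⟨by linarith [ht.1], by linarith [ht.2]⟩

lemma _root_.LipschitzOnWith.comp_const_sub {γ : ℝ → X} {T : ℝ}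
    (hγ : LipschitzOnWith 1 γ (Icc 0 T)) : LipschitzOnWith 1 (fun t => γ (T - t)) (Icc 0 T) :=
  lipschitzOnWith_one_iff.2 fun s hs t ht => by
    have := lipschitzOnWith_one_iff.1 hγ (T - s) ⟨by linarith [hs.2], by linarith [hs.1]⟩
      (T - t) ⟨by linarith [ht.2], by linarith [ht.1]⟩
    rwa [show T - s - (T - t) = -(s - t) by ring, abs_neg] at this

lemma _root_.LipschitzOnWith.intervalIntegrable_comp {ρ : X → ℝ} {γ : ℝ → X} {a b : ℝ}
    (hγ : LipschitzOnWith 1 γ (Icc a b)) (hρ : Continuous ρ) (hab : a ≤ b) :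
    IntervalIntegrable (fun t => ρ (γ t)) MeasureTheory.volume a b :=
  ContinuousOn.intervalIntegrable <| by
    rw [uIcc_of_le hab]
    exact hρ.comp_continuousOn hγ.continuousOn

namespace IsGeodesicSegWrt

variable {γ : ℝ → X} {x y : X}

lemma dist_eq (hγ : IsGeodesicSegWrt (distFun X) γ x y) {s t : ℝ}
    (hs : s ∈ Icc 0 (dist x y)) (ht : t ∈ Icc 0 (dist x y)) : dist (γ s) (γ t) = |s - t| :=
  hγ.2.2 s hs t ht

lemma dist_left (hγ : IsGeodesicSegWrt (distFun X) γ x y) {t : ℝ}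
    (ht : t ∈ Icc 0 (dist x y)) : dist x (γ t) = t := by
  rw [← hγ.1, hγ.dist_eq ⟨le_rfl, dist_nonneg⟩ ht, zero_sub, abs_neg, abs_of_nonneg ht.1]

lemma dist_right (hγ : IsGeodesicSegWrt (distFun X) γ x y) {t : ℝ}
    (ht : t ∈ Icc 0 (dist x y)) : dist (γ t) y = dist x y - t := by
  have hy : γ (dist x y) = y := hγ.2.1
  calc dist (γ t) y = dist (γ t) (γ (dist x y)) := by rw [hy]
    _ = dist x y - t := by
      rw [hγ.dist_eq ht ⟨dist_nonneg, le_rfl⟩, abs_of_nonpos (by linarith [ht.2]), neg_sub]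

lemma lipschitzOnWith (hγ : IsGeodesicSegWrt (distFun X) γ x y) :
    LipschitzOnWith 1 γ (Icc 0 (dist x y)) :=
  lipschitzOnWith_one_iff.2 fun _ hs _ ht => (hγ.dist_eq hs ht).le

end IsGeodesicSegWrt

end Curves

section ConformalDistance

variable [MetricSpace X] {ρ : X → ℝ} {x y z : X}

lemma confDistWrt_nonneg (hρ : ∀ p, 0 ≤ ρ p) (x y : X) : 0 ≤ confDistWrt (distFun X) ρ x y :=
  Real.sInf_nonneg <| by
    rintro _ ⟨T, γ, hT, -, -, -, rfl⟩
    exact intervalIntegral.integral_nonneg hT fun t _ => hρ (γ t)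

lemma confDistWrt_le_integral (hρ : ∀ p, 0 ≤ ρ p) {T : ℝ} {γ : ℝ → X} (hT : 0 ≤ T)
    (hγ : LipschitzOnWith 1 γ (Icc 0 T)) (h0 : γ 0 = x) (hT' : γ T = y) :
    confDistWrt (distFun X) ρ x y ≤ ∫ t in (0:ℝ)..T, ρ (γ t) := by
  refine csInf_le ⟨0, ?_⟩ ⟨T, γ, hT, lipschitzOnWith_one_iff.1 hγ, h0, hT', rfl⟩
  rintro _ ⟨T, γ, hT, -, -, -, rfl⟩
  exact intervalIntegral.integral_nonneg hT fun t _ => hρ (γ t)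

lemma IsGeodesicSegWrt.confDistWrt_le (hρ : ∀ p, 0 ≤ ρ p) {γ : ℝ → X}
    (hγ : IsGeodesicSegWrt (distFun X) γ x y) :
    confDistWrt (distFun X) ρ x y ≤ ∫ t in (0:ℝ)..(dist x y), ρ (γ t) :=
  confDistWrt_le_integral hρ dist_nonneg hγ.lipschitzOnWith hγ.1 hγ.2.1

lemma le_confDistWrt (hgs : GeodesicSpaceWrt (distFun X)) {c : ℝ}
    (h : ∀ (T : ℝ) (γ : ℝ → X), 0 ≤ T → LipschitzOnWith 1 γ (Icc 0 T) → γ 0 = x → γ T = y →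
      c ≤ ∫ t in (0:ℝ)..T, ρ (γ t)) :
    c ≤ confDistWrt (distFun X) ρ x y := by
  obtain ⟨γ, hγ⟩ := hgs x y
  refine le_csInf ⟨_, dist x y, γ, dist_nonneg, lipschitzOnWith_one_iff.1 hγ.lipschitzOnWith,
    hγ.1, hγ.2.1, rfl⟩ ?_
  rintro _ ⟨T, γ, hT, hγ, h0, hT', rfl⟩
  exact h T γ hT (lipschitzOnWith_one_iff.2 hγ) h0 hT'

lemma confDistWrt_comm (hρ : ∀ p, 0 ≤ ρ p) (hgs : GeodesicSpaceWrt (distFun X)) (x y : X) :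
    confDistWrt (distFun X) ρ x y = confDistWrt (distFun X) ρ y x := by
  have key : ∀ x y : X, confDistWrt (distFun X) ρ y x ≤ confDistWrt (distFun X) ρ x y :=
    fun x y => le_confDistWrt hgs fun T γ hT hγ h0 hT' => by
      calc confDistWrt (distFun X) ρ y x ≤ ∫ t in (0:ℝ)..T, ρ (γ (T - t)) :=
            confDistWrt_le_integral hρ hT hγ.comp_const_sub (by simpa using hT')
              (by simpa using h0)
        _ = ∫ t in (0:ℝ)..T, ρ (γ t) := by
            simp [intervalIntegral.integral_comp_sub_left (fun t => ρ (γ t))]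
  exact le_antisymm (key y x) (key x y)

lemma confDistWrt_le_add_integral (hρc : Continuous ρ) (hρ : ∀ p, 0 ≤ ρ p)
    {T₁ T₂ : ℝ} {γ₁ γ₂ : ℝ → X} (hT₁ : 0 ≤ T₁) (hT₂ : 0 ≤ T₂)
    (hγ₁ : LipschitzOnWith 1 γ₁ (Icc 0 T₁)) (hγ₂ : LipschitzOnWith 1 γ₂ (Icc 0 T₂))
    (h₁0 : γ₁ 0 = x) (h₁ : γ₁ T₁ = y) (h₂0 : γ₂ 0 = y) (h₂ : γ₂ T₂ = z) :
    confDistWrt (distFun X) ρ x z ≤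
      (∫ t in (0:ℝ)..T₁, ρ (γ₁ t)) + ∫ t in (0:ℝ)..T₂, ρ (γ₂ t) := by
  set γ : ℝ → X := fun t => if t ≤ T₁ then γ₁ t else γ₂ (t - T₁)
  have e₁ : EqOn γ₁ γ (Icc 0 T₁) := fun t ht => (if_pos ht.2).symm
  have e₂ : EqOn (fun t => γ₂ (t - T₁)) γ (Icc T₁ (T₁ + T₂)) := by
    intro t ht
    by_cases h : t ≤ T₁
    · obtain rfl : t = T₁ := le_antisymm h ht.1
      simp [γ, h₁, h₂0]
    · simp [γ, h]
  have hL₁ := hγ₁.congr e₁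
  have hL₂ := (hγ₂.comp_sub_const T₁).congr e₂
  calc confDistWrt (distFun X) ρ x z ≤ ∫ t in (0:ℝ)..(T₁ + T₂), ρ (γ t) :=
        confDistWrt_le_integral hρ (by linarith) (hL₁.Icc_union hT₁ (by linarith) hL₂)
          (by simp [γ, hT₁, h₁0]) (by rw [← e₂ ⟨by linarith, le_rfl⟩]; simpa using h₂)
    _ = (∫ t in (0:ℝ)..T₁, ρ (γ t)) + ∫ t in T₁..(T₁ + T₂), ρ (γ t) :=
        (intervalIntegral.integral_add_adjacent_intervals (hL₁.intervalIntegrable_comp hρc hT₁)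
          (hL₂.intervalIntegrable_comp hρc (by linarith))).symm
    _ = (∫ t in (0:ℝ)..T₁, ρ (γ₁ t)) + ∫ t in (0:ℝ)..T₂, ρ (γ₂ t) := by
        congr 1
        · exact intervalIntegral.integral_congr fun t ht => by
            rw [uIcc_of_le hT₁] at ht; rw [← e₁ ht]
        · rw [← intervalIntegral.integral_congr (f := fun t => ρ (γ₂ (t - T₁))) fun t ht => by
            rw [uIcc_of_le (by linarith)] at ht; rw [← e₂ ht],
            intervalIntegral.integral_comp_sub_right (fun t => ρ (γ₂ t))]
          simp

lemma confDistWrt_triangle (hρc : Continuous ρ) (hρ : ∀ p, 0 ≤ ρ p)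
    (hgs : GeodesicSpaceWrt (distFun X)) (x y z : X) :
    confDistWrt (distFun X) ρ x z ≤
      confDistWrt (distFun X) ρ x y + confDistWrt (distFun X) ρ y z := by
  have h : confDistWrt (distFun X) ρ x z - confDistWrt (distFun X) ρ x y ≤
      confDistWrt (distFun X) ρ y z :=
    le_confDistWrt hgs fun T₂ γ₂ hT₂ hγ₂ h₂0 h₂ => by
      have : confDistWrt (distFun X) ρ x z - ∫ t in (0:ℝ)..T₂, ρ (γ₂ t) ≤
          confDistWrt (distFun X) ρ x y :=
        le_confDistWrt hgs fun T₁ γ₁ hT₁ hγ₁ h₁0 h₁ => by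
          linarith [confDistWrt_le_add_integral hρc hρ hT₁ hT₂ hγ₁ hγ₂ h₁0 h₁ h₂0 h₂]
      linarith
  linarith

lemma abs_confDistWrt_sub_le (hρc : Continuous ρ) (hρ : ∀ p, 0 ≤ ρ p)
    (hgs : GeodesicSpaceWrt (distFun X)) (x y z : X) :
    |confDistWrt (distFun X) ρ x y - confDistWrt (distFun X) ρ x z| ≤
      confDistWrt (distFun X) ρ y z := by
  rw [abs_sub_le_iff]
  constructor
  · linarith [confDistWrt_triangle hρc hρ hgs x z y, confDistWrt_comm hρ hgs z y]
  · linarith [confDistWrt_triangle hρc hρ hgs x y z]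

end ConformalDistance

section ExpIntegrals

open Real

lemma integral_exp_neg_mul_add {ε : ℝ} (hε : ε ≠ 0) (c T : ℝ) :
    ∫ t in (0:ℝ)..T, exp (-ε * (c + t)) = exp (-ε * c) * (1 - exp (-ε * T)) / ε := by
  have hderiv : ∀ t, HasDerivAt (fun u => exp (-ε * (c + u)) / -ε) (exp (-ε * (c + t))) t := by
    intro t
    have h := (((hasDerivAt_id t).const_add c).const_mul (-ε)).exp.div_const (-ε)
    simp only [id, mul_one] at h
    rwa [mul_div_cancel_right₀ _ (neg_ne_zero.2 hε)] at h
  rw [intervalIntegral.integral_eq_sub_of_hasDerivAt (fun t _ => hderiv t)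
    ((by fun_prop : Continuous fun t => exp (-ε * (c + t))).intervalIntegrable _ _)]
  rw [add_zero, show -ε * (c + T) = -ε * c + -ε * T by ring, exp_add]
  field_simp
  ring

lemma integral_exp_neg_mul_add_abs_sub {ε : ℝ} (hε : ε ≠ 0) (c : ℝ) {t₀ d : ℝ}
    (h0 : 0 ≤ t₀) (hd : t₀ ≤ d) :
    ∫ t in (0:ℝ)..d, exp (-ε * (c + |t - t₀|)) =
      exp (-ε * c) * (2 - exp (-ε * t₀) - exp (-ε * (d - t₀))) / ε := by
  have hint : ∀ a b : ℝ, IntervalIntegrable (fun t => exp (-ε * (c + |t - t₀|)))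
      MeasureTheory.volume a b := fun a b => (by fun_prop : Continuous _).intervalIntegrable a b
  rw [← intervalIntegral.integral_add_adjacent_intervals (hint 0 t₀) (hint t₀ d)]
  have hleft : ∫ t in (0:ℝ)..t₀, exp (-ε * (c + |t - t₀|)) =
      ∫ t in (0:ℝ)..t₀, exp (-ε * (c + (t₀ - t))) :=
    intervalIntegral.integral_congr fun t ht => by
      rw [uIcc_of_le h0] at ht
      simp only [abs_sub_comm t, abs_of_nonneg (sub_nonneg.2 ht.2)]
  have hright : ∫ t in t₀..d, exp (-ε * (c + |t - t₀|)) =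
      ∫ t in t₀..d, exp (-ε * (c + (t - t₀))) :=
    intervalIntegral.integral_congr fun t ht => by
      rw [uIcc_of_le hd] at ht
      simp only [abs_of_nonneg (sub_nonneg.2 ht.1)]
  rw [hleft, hright, intervalIntegral.integral_comp_sub_left (fun t => exp (-ε * (c + t))),
    intervalIntegral.integral_comp_sub_right (fun t => exp (-ε * (c + t))), sub_self, sub_zero,
    integral_exp_neg_mul_add hε, integral_exp_neg_mul_add hε]
  ring

lemma two_sub_exp_sub_exp_le {ε t₀ d : ℝ} (hε : 0 < ε) (h0 : 0 ≤ t₀) (hd : t₀ ≤ d) :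
    2 - exp (-ε * t₀) - exp (-ε * (d - t₀)) ≤ 2 * min 1 (ε * d) := by
  have h₁ := add_one_le_exp (-ε * t₀)
  have h₂ := add_one_le_exp (-ε * (d - t₀))
  have := exp_pos (-ε * t₀)
  have := exp_pos (-ε * (d - t₀))
  rw [mul_min_of_nonneg _ _ zero_le_two]
  refine le_min ?_ ?_ <;> nlinarith

lemma min_div_two_le_one_sub_exp_neg {u : ℝ} (hu : 0 ≤ u) : min 1 u / 2 ≤ 1 - exp (-u) := by
  rcases le_total 1 u with h | h
  · have : exp (-u) ≤ exp (-1) := exp_le_exp.2 (by linarith)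
    have : exp (-1) ≤ 1 / 2 := by
      rw [exp_neg, inv_le_comm₀ (exp_pos 1) (by norm_num)]
      linarith [add_one_le_exp 1]
    rw [min_eq_left h]
    linarith
  · have hexp : exp (-u) ≤ 1 / (1 + u) := by
      rw [exp_neg, inv_eq_one_div]
      exact div_le_div_of_nonneg_left zero_le_one (by linarith) (by linarith [add_one_le_exp u])
    have : 1 / (1 + u) ≤ 1 - u / 2 := by
      rw [div_le_iff₀ (by linarith)]
      nlinarith
    rw [min_eq_right h]
    linarith

lemma min_div_four_le_two_sub_exp_sub_exp {ε t₀ d : ℝ} (hε : 0 < ε) (h0 : 0 ≤ t₀)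
    (hd : t₀ ≤ d) : min 1 (ε * d) / 4 ≤ 2 - exp (-ε * t₀) - exp (-ε * (d - t₀)) := by
  have half : ∀ s, d / 2 ≤ s → min 1 (ε * d) / 4 ≤ 1 - exp (-ε * s) := fun s hs => by
    have h₁ := min_div_two_le_one_sub_exp_neg (u := ε * (d / 2)) (by nlinarith)
    have h₂ : exp (-ε * s) ≤ exp (-(ε * (d / 2))) := exp_le_exp.2 (by nlinarith)
    have h₃ : min 1 (ε * d) ≤ 2 * min 1 (ε * (d / 2)) := by
      rw [mul_min_of_nonneg _ _ zero_le_two]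
      exact le_min (by linarith [min_le_left 1 (ε * d)]) (by linarith [min_le_right 1 (ε * d)])
    linarith
  have h₁ : exp (-ε * t₀) ≤ 1 := exp_le_one_iff.2 (by nlinarith)
  have h₂ : exp (-ε * (d - t₀)) ≤ 1 := exp_le_one_iff.2 (by nlinarith)
  rcases le_total (d / 2) t₀ with h | h
  · linarith [half t₀ h]
  · linarith [half (d - t₀) (by linarith)]

end ExpIntegrals

lemma _root_.LipschitzWith.le_add_dist {X : Type*} [PseudoMetricSpace X] {b : X → ℝ}
    (hb : LipschitzWith 1 b) (x y : X) : b x ≤ b y + dist x y := by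
  simpa using hb.le_add_mul x y

section UniformizationDensity

open Real

lemma uniformizationDensity_nonneg (b : X → ℝ) (ε : ℝ) (x : X) :
    0 ≤ uniformizationDensity b ε x :=
  (exp_pos _).le

variable [MetricSpace X] {b : X → ℝ} {ε : ℝ} {x y : X}

def gromovProdAt (b : X → ℝ) (x y : X) : ℝ := (b x + b y - dist x y) / 2

abbrev confDist (b : X → ℝ) (ε : ℝ) : X → X → ℝ :=
  confDistWrt (distFun X) (uniformizationDensity b ε)

lemma continuous_uniformizationDensity (hb : LipschitzWith 1 b) (ε : ℝ) :
    Continuous (uniformizationDensity b ε) :=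
  continuous_exp.comp (continuous_const.mul hb.continuous)

lemma confDist_nonneg (b : X → ℝ) (ε : ℝ) (x y : X) : 0 ≤ confDist b ε x y :=
  confDistWrt_nonneg (uniformizationDensity_nonneg b ε) x y

lemma confDist_comm (hgs : GeodesicSpaceWrt (distFun X)) (x y : X) :
    confDist b ε x y = confDist b ε y x :=
  confDistWrt_comm (uniformizationDensity_nonneg b ε) hgs x y

lemma confDist_triangle (hb : LipschitzWith 1 b) (hgs : GeodesicSpaceWrt (distFun X))
    (x y z : X) : confDist b ε x z ≤ confDist b ε x y + confDist b ε y z :=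
  confDistWrt_triangle (continuous_uniformizationDensity hb ε)
    (uniformizationDensity_nonneg b ε) hgs x y z

lemma abs_confDist_sub_le (hb : LipschitzWith 1 b) (hgs : GeodesicSpaceWrt (distFun X))
    (x y z : X) : |confDist b ε x y - confDist b ε x z| ≤ confDist b ε y z :=
  abs_confDistWrt_sub_le (continuous_uniformizationDensity hb ε)
    (uniformizationDensity_nonneg b ε) hgs x y z

lemma gromovProdAt_add_abs_sub_le (hb : LipschitzWith 1 b) {γ : ℝ → X}
    (hγ : IsGeodesicSegWrt (distFun X) γ x y) {t : ℝ} (ht : t ∈ Icc 0 (dist x y)) :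
    gromovProdAt b x y + |t - (b x - b y + dist x y) / 2| ≤ b (γ t) := by
  have hx := hb.le_add_dist x (γ t)
  have hy := hb.le_add_dist y (γ t)
  rw [hγ.dist_left ht] at hx
  rw [dist_comm, hγ.dist_right ht] at hy
  rw [gromovProdAt, ← le_sub_iff_add_le', abs_sub_le_iff]
  constructor <;> linarith

lemma confDist_le (hb : LipschitzWith 1 b) (hε : 0 < ε) (hgs : GeodesicSpaceWrt (distFun X))
    (x y : X) :
    confDist b ε x y ≤ 2 * min 1 (ε * dist x y) * exp (-ε * gromovProdAt b x y) / ε := by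
  obtain ⟨γ, hγ⟩ := hgs x y
  have ht₁ : 0 ≤ (b x - b y + dist x y) / 2 ∧ (b x - b y + dist x y) / 2 ≤ dist x y := by
    constructor <;> linarith [hb.le_add_dist x y, hb.le_add_dist y x, dist_comm x y]
  set t₁ := (b x - b y + dist x y) / 2
  calc confDist b ε x y ≤ ∫ t in (0:ℝ)..(dist x y), uniformizationDensity b ε (γ t) :=
        hγ.confDistWrt_le (uniformizationDensity_nonneg b ε)
    _ ≤ ∫ t in (0:ℝ)..(dist x y), exp (-ε * (gromovProdAt b x y + |t - t₁|)) :=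
        intervalIntegral.integral_mono_on dist_nonneg
          (hγ.lipschitzOnWith.intervalIntegrable_comp
            (continuous_uniformizationDensity hb ε) dist_nonneg)
          ((by fun_prop : Continuous _).intervalIntegrable _ _) fun t ht =>
          exp_le_exp.2 (by nlinarith [gromovProdAt_add_abs_sub_le hb hγ ht])
    _ = exp (-ε * gromovProdAt b x y) * (2 - exp (-ε * t₁) - exp (-ε * (dist x y - t₁))) / ε :=
        integral_exp_neg_mul_add_abs_sub hε.ne' _ ht₁.1 ht₁.2
    _ ≤ exp (-ε * gromovProdAt b x y) * (2 * min 1 (ε * dist x y)) / ε := by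
        gcongr
        exact two_sub_exp_sub_exp_le hε ht₁.1 ht₁.2
    _ = _ := by ring

lemma le_confDist_of_isGH {M : ℝ} (hb : LipschitzWith 1 b) (hε : 0 < ε) (hM : 0 < M)
    (hgh : IsGHDensityWrt (distFun X) M (uniformizationDensity b ε)) {γ : ℝ → X}
    (hγ : IsGeodesicSegWrt (distFun X) γ x y) {t₀ : ℝ} (ht₀ : t₀ ∈ Icc 0 (dist x y)) :
    min 1 (ε * dist x y) * exp (-ε * b (γ t₀)) / (4 * M * ε) ≤ confDist b ε x y := by
  have hint : min 1 (ε * dist x y) * exp (-ε * b (γ t₀)) / (4 * ε) ≤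
      ∫ t in (0:ℝ)..(dist x y), uniformizationDensity b ε (γ t) :=
    calc min 1 (ε * dist x y) * exp (-ε * b (γ t₀)) / (4 * ε)
        = exp (-ε * b (γ t₀)) * (min 1 (ε * dist x y) / 4) / ε := by ring
      _ ≤ exp (-ε * b (γ t₀)) * (2 - exp (-ε * t₀) - exp (-ε * (dist x y - t₀))) / ε := by
          gcongr
          exact min_div_four_le_two_sub_exp_sub_exp hε ht₀.1 ht₀.2
      _ = ∫ t in (0:ℝ)..(dist x y), exp (-ε * (b (γ t₀) + |t - t₀|)) :=
          (integral_exp_neg_mul_add_abs_sub hε.ne' _ ht₀.1 ht₀.2).symm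
      _ ≤ ∫ t in (0:ℝ)..(dist x y), uniformizationDensity b ε (γ t) :=
          intervalIntegral.integral_mono_on dist_nonneg
            ((by fun_prop : Continuous _).intervalIntegrable _ _)
            (hγ.lipschitzOnWith.intervalIntegrable_comp
              (continuous_uniformizationDensity hb ε) dist_nonneg) fun t ht => by
            have := hb.le_add_dist (γ t) (γ t₀)
            rw [hγ.dist_eq ht ht₀] at this
            exact exp_le_exp.2 (by nlinarith)
  have hGH : ∫ t in (0:ℝ)..(dist x y), uniformizationDensity b ε (γ t) ≤ M * confDist b ε x y :=
    hgh x y γ hγ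
  calc min 1 (ε * dist x y) * exp (-ε * b (γ t₀)) / (4 * M * ε)
      = min 1 (ε * dist x y) * exp (-ε * b (γ t₀)) / (4 * ε) / M := by field_simp
    _ ≤ M * confDist b ε x y / M := by gcongr; exact hint.trans hGH
    _ = confDist b ε x y := by field_simp

lemma le_confDist (hb : LipschitzWith 1 b) (hε : 0 < ε) (hgs : GeodesicSpaceWrt (distFun X))
    (x y : X) : min 1 (ε * dist x y) * exp (-ε * b x) / (2 * ε) ≤ confDist b ε x y := by
  refine le_confDistWrt hgs fun T γ hT hγ h0 hT' => ?_
  have hdT : dist x y ≤ T := by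
    simpa [h0, hT', abs_of_nonneg hT] using
      lipschitzOnWith_one_iff.1 hγ 0 ⟨le_rfl, hT⟩ T ⟨hT, le_rfl⟩
  calc min 1 (ε * dist x y) * exp (-ε * b x) / (2 * ε)
      = exp (-ε * b x) * (min 1 (ε * dist x y) / 2) / ε := by ring
    _ ≤ exp (-ε * b x) * (1 - exp (-ε * T)) / ε := by
        have h₁ := min_div_two_le_one_sub_exp_neg (u := ε * dist x y) (by positivity)
        have h₂ : exp (-ε * T) ≤ exp (-(ε * dist x y)) := exp_le_exp.2 (by nlinarith)
        gcongr
        linarith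
    _ = ∫ t in (0:ℝ)..T, exp (-ε * (b x + t)) := (integral_exp_neg_mul_add hε.ne' _ _).symm
    _ ≤ ∫ t in (0:ℝ)..T, uniformizationDensity b ε (γ t) :=
        intervalIntegral.integral_mono_on hT ((by fun_prop : Continuous _).intervalIntegrable _ _)
          (hγ.intervalIntegrable_comp (continuous_uniformizationDensity hb ε) hT) fun t ht => by
          have := hb.le_add_dist (γ t) x
          have hd : dist (γ t) x ≤ t := by
            simpa [h0, abs_of_nonneg ht.1] using
              lipschitzOnWith_one_iff.1 hγ t ht 0 ⟨le_rfl, hT⟩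
          exact exp_le_exp.2 (by nlinarith)

lemma confDist_pos (hb : LipschitzWith 1 b) (hε : 0 < ε) (hgs : GeodesicSpaceWrt (distFun X))
    (hxy : x ≠ y) : 0 < confDist b ε x y := by
  refine lt_of_lt_of_le ?_ (le_confDist hb hε hgs x y)
  have : 0 < min 1 (ε * dist x y) := lt_min one_pos (mul_pos hε (dist_pos.2 hxy))
  positivity


lemma sub_le_gromovProdAt (hb : LipschitzWith 1 b) (w x y : X) :
    b w - (dist w x + dist w y) ≤ gromovProdAt b x y := by
  rw [gromovProdAt]
  linarith [hb.le_add_dist w x, hb.le_add_dist w y, dist_triangle_left x y w]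

lemma gromovProdAt_le (hb : LipschitzWith 1 b) (w x y : X) :
    gromovProdAt b x y ≤ b w + (dist w x + dist w y) / 2 := by
  rw [gromovProdAt]
  linarith [hb.le_add_dist x w, hb.le_add_dist y w, dist_comm w x, dist_comm w y,
    dist_nonneg (x := x) (y := y)]

lemma confDist_le_mul_exp (hb : LipschitzWith 1 b) (hε : 0 < ε)
    (hgs : GeodesicSpaceWrt (distFun X)) (w x y : X) :
    confDist b ε x y ≤ 2 * dist x y * exp (ε * (dist w x + dist w y)) * exp (-ε * b w) := by
  refine (confDist_le hb hε hgs x y).trans ?_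
  have hexp : exp (-ε * gromovProdAt b x y) ≤ exp (ε * (dist w x + dist w y)) * exp (-ε * b w) := by
    rw [← exp_add]
    exact exp_le_exp.2 (by nlinarith [sub_le_gromovProdAt hb w x y])
  calc 2 * min 1 (ε * dist x y) * exp (-ε * gromovProdAt b x y) / ε
      ≤ 2 * (ε * dist x y) * (exp (ε * (dist w x + dist w y)) * exp (-ε * b w)) / ε := by
        gcongr
        exact min_le_right _ _
    _ = _ := by field_simp

lemma confDist_le_exp (hb : LipschitzWith 1 b) (hε : 0 < ε) (hgs : GeodesicSpaceWrt (distFun X))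
    (x y : X) : confDist b ε x y ≤ 2 * exp (ε * dist x y) * exp (-ε * b x) / ε := by
  refine (confDist_le hb hε hgs x y).trans ?_
  have hexp : exp (-ε * gromovProdAt b x y) ≤ exp (ε * dist x y) * exp (-ε * b x) := by
    rw [← exp_add]
    exact exp_le_exp.2 (by nlinarith [sub_le_gromovProdAt hb x x y, dist_self x])
  calc 2 * min 1 (ε * dist x y) * exp (-ε * gromovProdAt b x y) / ε
      ≤ 2 * 1 * (exp (ε * dist x y) * exp (-ε * b x)) / ε := by
        gcongr
        exact min_le_left _ _
    _ = _ := by ring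

end UniformizationDensity

section Hyperbolic

variable [MetricSpace X] {δ : ℝ} {x y z : X} {γ : ℝ → X}

lemma IsGeodesicSegWrt.dist_add_dist (hγ : IsGeodesicSegWrt (distFun X) γ x y) {t : ℝ}
    (ht : t ∈ Icc 0 (dist x y)) : dist x (γ t) + dist (γ t) y = dist x y := by
  rw [hγ.dist_left ht, hγ.dist_right ht]
  ring

lemma dist_add_dist_le_of_dist_le {u v p q : X} (hq : dist u q + dist q v = dist u v)
    (hpq : dist p q ≤ δ) : dist u p + dist p v ≤ dist u v + 2 * δ := by
  linarith [dist_triangle u q p, dist_triangle p q v, dist_comm p q]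

lemma DeltaHyperbolicWrt.exists_dist_le_between (hgs : GeodesicSpaceWrt (distFun X))
    (hhyp : DeltaHyperbolicWrt (distFun X) δ) (z : X) (hγ : IsGeodesicSegWrt (distFun X) γ x y)
    {t : ℝ} (ht : t ∈ Icc 0 (dist x y)) :
    ∃ q, dist (γ t) q ≤ δ ∧ (dist y q + dist q z = dist y z ∨ dist z q + dist q x = dist z x) := by
  obtain ⟨γ₂, hγ₂⟩ := hgs y z
  obtain ⟨γ₃, hγ₃⟩ := hgs z x
  obtain ⟨q, hq, hpq⟩ := (hhyp x y z γ γ₂ γ₃ hγ hγ₂ hγ₃).1 (γ t) ⟨t, ht, rfl⟩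
  refine ⟨q, hpq, ?_⟩
  rcases hq with ⟨w, hw, rfl⟩ | ⟨w, hw, rfl⟩
  · exact Or.inl (hγ₂.dist_add_dist hw)
  · exact Or.inr (hγ₃.dist_add_dist hw)

lemma DeltaHyperbolicWrt.exists_dist_le_gromovProdWrt (hgs : GeodesicSpaceWrt (distFun X))
    (hhyp : DeltaHyperbolicWrt (distFun X) δ) (z : X) (hγ : IsGeodesicSegWrt (distFun X) γ x y) :
    ∃ t ∈ Icc 0 (dist x y), dist z (γ t) ≤ gromovProdWrt (distFun X) z x y + 2 * δ := by
  have hyz := dist_triangle y x z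
  have hxz := dist_triangle x y z
  have ht : (dist x z + dist x y - dist y z) / 2 ∈ Icc 0 (dist x y) := by
    constructor <;> linarith [dist_comm x y]
  refine ⟨_, ht, ?_⟩
  have hleft := hγ.dist_left ht
  have hright := hγ.dist_right ht
  set p := γ ((dist x z + dist x y - dist y z) / 2)
  simp only [gromovProdWrt, distFun_apply]
  obtain ⟨q, hpq, hq | hq⟩ := hhyp.exists_dist_le_between hgs z hγ ht
  · linarith [dist_add_dist_le_of_dist_le hq hpq, dist_comm y p, dist_comm z p, dist_comm z y]
  · linarith [dist_add_dist_le_of_dist_le hq hpq, dist_comm p x, dist_comm z x]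

end Hyperbolic

section Busemann

variable [MetricSpace X] {δ : ℝ} {ρ γ : ℝ → X} {x y : X}

namespace IsGeodesicRayWrt

lemma dist_eq (hρ : IsGeodesicRayWrt (distFun X) ρ) {s t : ℝ} (hs : 0 ≤ s) (ht : 0 ≤ t) :
    dist (ρ s) (ρ t) = |s - t| :=
  hρ s hs t ht

lemma isGeodesicSegWrt (hρ : IsGeodesicRayWrt (distFun X) ρ) {m n : ℝ} (hm : 0 ≤ m)
    (hmn : m ≤ n) : IsGeodesicSegWrt (distFun X) (fun w => ρ (m + w)) (ρ m) (ρ n) := by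
  have hd : dist (ρ m) (ρ n) = n - m := by
    rw [hρ.dist_eq hm (hm.trans hmn), abs_of_nonpos (by linarith), neg_sub]
  refine ⟨by simp, by simp [hd], fun a ha c hc => ?_⟩
  simp only [distFun_apply, hd] at ha hc ⊢
  rw [hρ.dist_eq (by linarith [ha.1]) (by linarith [hc.1])]
  ring_nf

lemma comp_const_add (hρ : IsGeodesicRayWrt (distFun X) ρ) {t₀ : ℝ} (ht₀ : 0 ≤ t₀) :
    IsGeodesicRayWrt (distFun X) (fun u => ρ (t₀ + u)) := fun s hs t ht => by
  rw [hρ (t₀ + s) (by simp only [mem_Ici] at hs ⊢; linarith) (t₀ + t)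
    (by simp only [mem_Ici] at ht ⊢; linarith)]
  ring_nf

lemma dist_sub_le_dist_sub (hρ : IsGeodesicRayWrt (distFun X) ρ) (w : X) {s t : ℝ}
    (hs : 0 ≤ s) (hst : s ≤ t) : dist (ρ t) w - t ≤ dist (ρ s) w - s := by
  have := hρ.dist_eq (hs.trans hst) hs
  rw [abs_of_nonneg (by linarith)] at this
  linarith [dist_triangle (ρ t) (ρ s) w]

lemma bddBelow_image (hρ : IsGeodesicRayWrt (distFun X) ρ) (w : X) :
    BddBelow ((fun t => distFun X (ρ t) w - t) '' Ici 0) := by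
  refine ⟨-dist (ρ 0) w, ?_⟩
  rintro _ ⟨t, ht, rfl⟩
  have := hρ.dist_eq le_rfl ht
  rw [zero_sub, abs_neg, abs_of_nonneg ht] at this
  simp only [distFun_apply]
  linarith [dist_triangle (ρ 0) w (ρ t), dist_comm w (ρ t)]

lemma busemannWrt_le (hρ : IsGeodesicRayWrt (distFun X) ρ) (w : X) {t : ℝ} (ht : 0 ≤ t) :
    busemannWrt (distFun X) ρ w ≤ dist (ρ t) w - t :=
  csInf_le (hρ.bddBelow_image w) ⟨t, ht, rfl⟩

lemma lipschitzWith_busemannWrt (hρ : IsGeodesicRayWrt (distFun X) ρ) :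
    LipschitzWith 1 (busemannWrt (distFun X) ρ) := by
  refine LipschitzWith.of_le_add fun x y => ?_
  have : busemannWrt (distFun X) ρ x - dist x y ≤ busemannWrt (distFun X) ρ y := by
    refine le_csInf ⟨_, 0, self_mem_Ici, rfl⟩ ?_
    rintro _ ⟨t, ht, rfl⟩
    simp only [distFun_apply]
    linarith [hρ.busemannWrt_le x ht, dist_triangle (ρ t) y x, dist_comm x y]
  linarith

lemma tendsto_busemannWrt (hρ : IsGeodesicRayWrt (distFun X) ρ) (w : X) :
    Tendsto (fun n : ℕ => dist (ρ n) w - n) atTop (𝓝 (busemannWrt (distFun X) ρ w)) := by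
  have hanti : Antitone (fun n : ℕ => dist (ρ n) w - n) := fun m n hmn =>
    hρ.dist_sub_le_dist_sub w (Nat.cast_nonneg m) (Nat.cast_le.2 hmn)
  have hbdd : BddBelow (range fun n : ℕ => dist (ρ n) w - n) := by
    obtain ⟨B, hB⟩ := hρ.bddBelow_image w
    exact ⟨B, by rintro _ ⟨n, rfl⟩; exact hB ⟨n, mem_Ici.2 (Nat.cast_nonneg n), rfl⟩⟩
  convert tendsto_atTop_ciInf hanti hbdd using 2
  refine le_antisymm (le_ciInf fun n => hρ.busemannWrt_le w (Nat.cast_nonneg n)) ?_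
  refine le_csInf ⟨_, 0, self_mem_Ici, rfl⟩ ?_
  rintro _ ⟨t, ht, rfl⟩
  exact (ciInf_le hbdd ⌈t⌉₊).trans (hρ.dist_sub_le_dist_sub w ht (Nat.le_ceil t))

end IsGeodesicRayWrt

lemma IsGeodesicLineWrt.isGeodesicSegWrt (hγ : IsGeodesicLineWrt (distFun X) γ) {a c : ℝ}
    (hac : a ≤ c) : IsGeodesicSegWrt (distFun X) (fun w => γ (a + w)) (γ a) (γ c) := by
  have hd : dist (γ a) (γ c) = c - a := by
    rw [show dist (γ a) (γ c) = |a - c| from hγ a c, abs_of_nonpos (by linarith), neg_sub]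
  refine ⟨by simp, by simp [hd], fun s _ t _ => ?_⟩
  rw [distFun_apply, show dist (γ (a + s)) (γ (a + t)) = |a + s - (a + t)| from hγ _ _]
  ring_nf

lemma IsGeodesicLineWrt.isGeodesicRayWrt (hγ : IsGeodesicLineWrt (distFun X) γ) (t₀ : ℝ) :
    IsGeodesicRayWrt (distFun X) (fun u => γ (t₀ + u)) := fun s _ t _ => by
  rw [hγ (t₀ + s) (t₀ + t)]
  ring_nf

lemma DeltaHyperbolicWrt.exists_busemannWrt_le (hgs : GeodesicSpaceWrt (distFun X))
    (hhyp : DeltaHyperbolicWrt (distFun X) δ) (hρ : IsGeodesicRayWrt (distFun X) ρ)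
    (hγ : IsGeodesicSegWrt (distFun X) γ x y) :
    ∃ t ∈ Icc 0 (dist x y), busemannWrt (distFun X) ρ (γ t) ≤
      gromovProdAt (busemannWrt (distFun X) ρ) x y + 2 * δ := by
  obtain ⟨t₀, ht₀, hmin⟩ := isCompact_Icc.exists_isMinOn (nonempty_Icc.2 dist_nonneg)
    (hρ.lipschitzWith_busemannWrt.continuous.comp_continuousOn hγ.lipschitzOnWith.continuousOn)
  refine ⟨t₀, ht₀, le_of_tendsto_of_tendsto' tendsto_const_nhds
    ((((hρ.tendsto_busemannWrt x).add (hρ.tendsto_busemannWrt y)).sub_const (dist x y)).div_const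
      2 |>.add_const (2 * δ)) fun n => ?_⟩
  obtain ⟨t, ht, hle⟩ := hhyp.exists_dist_le_gromovProdWrt hgs (ρ n) hγ
  have hbt := hρ.busemannWrt_le (γ t) (Nat.cast_nonneg n)
  have hmin' : busemannWrt (distFun X) ρ (γ t₀) ≤ busemannWrt (distFun X) ρ (γ t) := hmin ht
  simp only [gromovProdWrt, distFun_apply] at hle
  linarith [dist_comm x (ρ n), dist_comm y (ρ n)]

lemma DeltaHyperbolicWrt.busemannWrt_add_sub_le_dist_sub (hgs : GeodesicSpaceWrt (distFun X))
    (hhyp : DeltaHyperbolicWrt (distFun X) δ) (hρ : IsGeodesicRayWrt (distFun X) ρ)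
    (hγ : IsGeodesicLineWrt (distFun X) γ) (hδ : 0 ≤ δ) {t u s : ℝ} (hu : 0 ≤ u) (hs : 0 ≤ s)
    (hfar : dist (ρ s) (γ (-s)) + 2 * δ < t + s) :
    busemannWrt (distFun X) ρ (γ t) + u - 2 * δ ≤ dist (ρ s) (γ (t + u)) - s := by
  have hts0 : 0 ≤ t + s := by linarith [dist_nonneg (x := ρ s) (y := γ (-s))]
  have hseg := hγ.isGeodesicSegWrt (show -s ≤ t + u by linarith)
  have hlen : dist (γ (-s)) (γ (t + u)) = t + u + s := by
    rw [show dist (γ (-s)) (γ (t + u)) = |-s - (t + u)| from hγ _ _, abs_of_nonpos (by linarith)]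
    ring
  have hts : t + s ∈ Icc 0 (dist (γ (-s)) (γ (t + u))) := by
    rw [hlen]; constructor <;> linarith
  have hdist : ∀ a c, dist (γ a) (γ c) = |a - c| := hγ
  obtain ⟨q, hpq, hq | hq⟩ := hhyp.exists_dist_le_between hgs (ρ s) hseg hts
  · have := dist_add_dist_le_of_dist_le hq hpq
    simp only [show -s + (t + s) = t by ring, hdist, show t + u - t = u by ring,
      abs_of_nonneg hu] at this
    linarith [hρ.busemannWrt_le (γ t) hs, dist_comm (γ t) (ρ s), dist_comm (γ (t + u)) (ρ s)]
  · have := dist_add_dist_le_of_dist_le hq hpq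
    simp only [show -s + (t + s) = t by ring, hdist, show t - -s = t + s by ring] at this
    linarith [le_abs_self (t + s), dist_nonneg (x := ρ s) (y := γ t)]

lemma DeltaHyperbolicWrt.busemannWrt_add_le (hgs : GeodesicSpaceWrt (distFun X))
    (hhyp : DeltaHyperbolicWrt (distFun X) δ) (hρ : IsGeodesicRayWrt (distFun X) ρ)
    (hγ : IsGeodesicLineWrt (distFun X) γ) (hequiv : RayEquivWrt (distFun X) (fun t => γ (-t)) ρ)
    (hδ : 0 ≤ δ) (t : ℝ) {u : ℝ} (hu : 0 ≤ u) :
    busemannWrt (distFun X) ρ (γ t) + u - 2 * δ ≤ busemannWrt (distFun X) ρ (γ (t + u)) := by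
  obtain ⟨c, hc⟩ := hequiv
  refine ge_of_tendsto (hρ.tendsto_busemannWrt (γ (t + u))) ?_
  filter_upwards [tendsto_natCast_atTop_atTop.eventually_ge_atTop (|t| + |c| + 2 * |δ| + 1)]
    with n hn
  have hn0 : (0 : ℝ) ≤ n := Nat.cast_nonneg n
  refine hhyp.busemannWrt_add_sub_le_dist_sub hgs hρ hγ hδ hu hn0 ?_
  have := hc n hn0
  simp only [distFun_apply] at this
  linarith [dist_comm (ρ n) (γ (-n)), le_abs_self c, neg_abs_le t, le_abs_self δ]

end Busemann

section UniformizingFun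

variable [MetricSpace X] {δ K : ℝ} {b : X → ℝ}

/-- The properties of a roughly starlike `b ∈ 𝔅̂(X)` on which the estimates rest. -/
structure IsUniformizingFun (δ K : ℝ) (b : X → ℝ) : Prop where
  lipschitzWith : LipschitzWith 1 b
  exists_le_gromovProdAt : ∀ (x y : X) (γ : ℝ → X), IsGeodesicSegWrt (distFun X) γ x y →
    ∃ t ∈ Icc 0 (dist x y), b (γ t) ≤ gromovProdAt b x y + 2 * δ
  exists_escapeRay : ∀ x : X, ∃ η : ℝ → X, IsGeodesicRayWrt (distFun X) η ∧
    dist x (η 0) ≤ K + 1 ∧ ∀ u, 0 ≤ u → b (η 0) + u - 2 * δ ≤ b (η u)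

lemma IsUniformizingFun.add_const (hb : IsUniformizingFun δ K b) (s : ℝ) :
    IsUniformizingFun δ K (fun x => b x + s) where
  lipschitzWith := LipschitzWith.of_le_add fun x y => by linarith [hb.lipschitzWith.le_add_dist x y]
  exists_le_gromovProdAt x y γ hγ := by
    obtain ⟨t, ht, hle⟩ := hb.exists_le_gromovProdAt x y γ hγ
    exact ⟨t, ht, by simp only [gromovProdAt] at hle ⊢; linarith⟩
  exists_escapeRay x := by
    obtain ⟨η, hη, hx, hgrow⟩ := hb.exists_escapeRay x
    exact ⟨η, hη, hx, fun u hu => by linarith [hgrow u hu]⟩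

lemma exists_dist_lt_of_infDistWrt_le {x : X} {s : Set X} (hs : s.Nonempty)
    (h : infDistWrt (distFun X) x s ≤ K) : ∃ p ∈ s, dist x p < K + 1 := by
  obtain ⟨_, ⟨p, hp, rfl⟩, hlt⟩ :=
    exists_lt_of_csInf_lt (hs.image _) (h.trans_lt (lt_add_one K))
  exact ⟨p, hp, hlt⟩

lemma isUniformizingFun_dist (hgs : GeodesicSpaceWrt (distFun X))
    (hhyp : DeltaHyperbolicWrt (distFun X) δ) (hδ : 0 ≤ δ) {z : X}
    (hstar : RoughStarlikeFromPointWrt (distFun X) K z) :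
    IsUniformizingFun δ K (fun x => dist x z) where
  lipschitzWith := LipschitzWith.of_le_add fun x y => by linarith [dist_triangle x y z]
  exists_le_gromovProdAt x y γ hγ := by
    obtain ⟨t, ht, hle⟩ := hhyp.exists_dist_le_gromovProdWrt hgs z hγ
    refine ⟨t, ht, ?_⟩
    simp only [gromovProdAt, gromovProdWrt, distFun_apply] at hle ⊢
    linarith [dist_comm z (γ t)]
  exists_escapeRay x := by
    obtain ⟨γ, hγ, hγ0, hinf⟩ := hstar x
    obtain ⟨_, ⟨t₀, ht₀, rfl⟩, hx⟩ :=
      exists_dist_lt_of_infDistWrt_le ((nonempty_Ici).image γ) hinf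
    have hval : ∀ u, 0 ≤ u → dist (γ (t₀ + u)) z = t₀ + u := fun u hu => by
      rw [← hγ0, show dist (γ (t₀ + u)) (γ 0) = |t₀ + u - 0| from
        hγ _ (by simp only [mem_Ici] at ht₀ ⊢; linarith) 0 self_mem_Ici]
      rw [sub_zero, abs_of_nonneg (by simp only [mem_Ici] at ht₀; linarith)]
    refine ⟨fun u => γ (t₀ + u), hγ.comp_const_add ht₀, by simpa using hx.le, fun u hu => ?_⟩
    simp only
    rw [hval u hu, hval 0 le_rfl]
    linarith

lemma isUniformizingFun_busemannWrt (hgs : GeodesicSpaceWrt (distFun X))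
    (hhyp : DeltaHyperbolicWrt (distFun X) δ) (hδ : 0 ≤ δ) {ρ : ℝ → X}
    (hρ : IsGeodesicRayWrt (distFun X) ρ) (hstar : RoughStarlikeFromRayWrt (distFun X) K ρ) :
    IsUniformizingFun δ K (busemannWrt (distFun X) ρ) where
  lipschitzWith := hρ.lipschitzWith_busemannWrt
  exists_le_gromovProdAt _ _ _ hγ := hhyp.exists_busemannWrt_le hgs hρ hγ
  exists_escapeRay x := by
    obtain ⟨γ, hγ, hequiv, hinf⟩ := hstar x
    obtain ⟨_, ⟨t₀, rfl⟩, hx⟩ := exists_dist_lt_of_infDistWrt_le (range_nonempty γ) hinf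
    refine ⟨fun u => γ (t₀ + u), hγ.isGeodesicRayWrt t₀, by simpa using hx.le, fun u hu => ?_⟩
    simpa using hhyp.busemannWrt_add_le hgs hρ hγ hequiv hδ t₀ hu

lemma BhatStarlike.isUniformizingFun (hgs : GeodesicSpaceWrt (distFun X))
    (hhyp : DeltaHyperbolicWrt (distFun X) δ) (hδ : 0 ≤ δ) (hb : BhatStarlike (distFun X) K b) :
    IsUniformizingFun δ K b := by
  rcases hb with ⟨z, s, hbz, hstar⟩ | ⟨ρ, s, hρ, hbρ, hstar⟩
  · rw [show b = fun x => dist x z + s from funext hbz]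
    exact (isUniformizingFun_dist hgs hhyp hδ hstar).add_const s
  · rw [show b = fun x => busemannWrt (distFun X) ρ x + s from funext hbρ]
    exact (isUniformizingFun_busemannWrt hgs hhyp hδ hρ hstar).add_const s

end UniformizingFun

section BoundaryDistance

variable {e : X → X → ℝ}

lemma bdryDistWrt_nonneg (he : ∀ x y, 0 ≤ e x y) (x : X) : 0 ≤ bdryDistWrt e x :=
  Real.sInf_nonneg fun _ ⟨u, _, _, hr⟩ =>
    ge_of_tendsto hr (Eventually.of_forall fun n => he x (u n))

lemma bdryDistWrt_le (he : ∀ x y, 0 ≤ e x y) {x : X} {u : ℕ → X} {r : ℝ} (hu : CauchyWrt e u)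
    (hnc : ¬ ConvWrt e u) (hr : Tendsto (fun n => e x (u n)) atTop (𝓝 r)) : bdryDistWrt e x ≤ r :=
  csInf_le ⟨0, fun _ ⟨v, _, _, hv⟩ => ge_of_tendsto hv (Eventually.of_forall fun n => he x (v n))⟩
    ⟨u, hu, hnc, hr⟩

lemma le_bdryDistWrt {x : X} {u : ℕ → X} {r c : ℝ} (hu : CauchyWrt e u) (hnc : ¬ ConvWrt e u)
    (hr : Tendsto (fun n => e x (u n)) atTop (𝓝 r))
    (h : ∀ v, CauchyWrt e v → ¬ ConvWrt e v → ∀ᶠ n in atTop, c ≤ e x (v n)) :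
    c ≤ bdryDistWrt e x :=
  le_csInf ⟨r, u, hu, hnc, hr⟩ fun _ ⟨v, hv, hvnc, hvr⟩ => ge_of_tendsto hvr (h v hv hvnc)

lemma convWrt_of_tendsto_subseq (he : ∀ x y, 0 ≤ e x y)
    (htri : ∀ x y z, e x z ≤ e x y + e y z) {u : ℕ → X} (hu : CauchyWrt e u) {φ : ℕ → ℕ}
    (hφ : StrictMono φ) {y : X} (hy : Tendsto (fun n => e (u (φ n)) y) atTop (𝓝 0)) :
    ConvWrt e u := by
  refine ⟨y, Metric.tendsto_atTop.2 fun θ hθ => ?_⟩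
  obtain ⟨N, hN⟩ := hu (θ / 2) (half_pos hθ)
  obtain ⟨k, hk⟩ := eventually_atTop.1 (hy.eventually (gt_mem_nhds (half_pos hθ)))
  have hφk : N ≤ φ (max k N) := (le_max_right k N).trans (hφ.le_apply)
  refine ⟨N, fun n hn => ?_⟩
  rw [Real.dist_eq, sub_zero, abs_of_nonneg (he _ _)]
  linarith [htri (u n) (u (φ (max k N))) y, hN n hn _ hφk, hk (max k N) (le_max_left k N)]

lemma PartialLipschitzWrt.mono {e' : Y → Y → ℝ} {f : X → Y}
    {L L' lam lam' : ℝ} (he : ∀ x y, 0 ≤ e x y) (h : PartialLipschitzWrt e e' L lam f)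
    (hL : L ≤ L') (hlam : lam' ≤ lam) : PartialLipschitzWrt e e' L' lam' f := by
  intro x y z hy hz
  have hbd := bdryDistWrt_nonneg he x
  have hmono : lam' * bdryDistWrt e x ≤ lam * bdryDistWrt e x := by gcongr
  exact (h x y z (hy.trans_le hmono) (hz.trans_le hmono)).trans
    (by gcongr; exact div_nonneg (he y z) hbd)

end BoundaryDistance


section BoundaryOfUniformization

open Real

variable [MetricSpace X] {δ K ε : ℝ} {b : X → ℝ}

lemma tendsto_confDist_zero (hb : LipschitzWith 1 b) (hε : 0 < ε)
    (hgs : GeodesicSpaceWrt (distFun X)) {v : ℕ → X} {y : X} (hv : Tendsto v atTop (𝓝 y)) :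
    Tendsto (fun n => confDist b ε (v n) y) atTop (𝓝 0) := by
  have hf : Tendsto (fun r => 2 * r * exp (ε * r) * exp (-ε * b y)) (𝓝 0) (𝓝 0) := by
    simpa using ((by fun_prop : Continuous fun r => 2 * r * exp (ε * r) * exp (-ε * b y)).tendsto 0)
  refine squeeze_zero (fun n => confDist_nonneg b ε _ y) (fun n => ?_)
    (hf.comp (tendsto_iff_dist_tendsto_zero.1 hv))
  simpa [dist_comm y] using confDist_le_mul_exp hb hε hgs y (v n) y

lemma eventually_le_dist_of_not_convWrt [ProperSpace X] (hb : LipschitzWith 1 b) (hε : 0 < ε)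
    (hgs : GeodesicSpaceWrt (distFun X)) {u : ℕ → X} (hu : CauchyWrt (confDist b ε) u)
    (hnc : ¬ ConvWrt (confDist b ε) u) (x : X) (R : ℝ) : ∀ᶠ n in atTop, R ≤ dist x (u n) := by
  by_contra h
  simp only [not_eventually, not_le] at h
  obtain ⟨φ, hφ, hφR⟩ := extraction_of_frequently_atTop h
  obtain ⟨y, -, ψ, hψ, hlim⟩ :=
    (isCompact_closedBall x R).tendsto_subseq fun n => mem_closedBall'.2 (hφR n).le
  exact hnc (convWrt_of_tendsto_subseq (confDist_nonneg b ε) (confDist_triangle hb hgs) hu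
    (hφ.comp hψ) (tendsto_confDist_zero hb hε hgs hlim))

lemma confDist_ray_le (hb : LipschitzWith 1 b) (hε : 0 < ε) {η : ℝ → X}
    (hη : IsGeodesicRayWrt (distFun X) η) {c : ℝ} (hgrow : ∀ u, 0 ≤ u → c + u ≤ b (η u))
    {m n : ℝ} (hm : 0 ≤ m) (hmn : m ≤ n) : confDist b ε (η m) (η n) ≤ exp (-ε * (c + m)) / ε := by
  have hseg := hη.isGeodesicSegWrt hm hmn
  calc confDist b ε (η m) (η n)
      ≤ ∫ t in (0:ℝ)..(dist (η m) (η n)), uniformizationDensity b ε (η (m + t)) :=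
        hseg.confDistWrt_le (uniformizationDensity_nonneg b ε)
    _ ≤ ∫ t in (0:ℝ)..(dist (η m) (η n)), exp (-ε * ((c + m) + t)) :=
        intervalIntegral.integral_mono_on dist_nonneg
          (hseg.lipschitzOnWith.intervalIntegrable_comp
            (continuous_uniformizationDensity hb ε) dist_nonneg)
          ((by fun_prop : Continuous _).intervalIntegrable _ _) fun t ht =>
          exp_le_exp.2 (by nlinarith [hgrow (m + t) (by linarith [ht.1])])
    _ = exp (-ε * (c + m)) * (1 - exp (-ε * dist (η m) (η n))) / ε :=
        integral_exp_neg_mul_add hε.ne' _ _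
    _ ≤ exp (-ε * (c + m)) / ε :=
        div_le_div_of_nonneg_right (mul_le_of_le_one_right (exp_pos _).le
          (by linarith [exp_pos (-ε * dist (η m) (η n))])) hε.le

lemma cauchyWrt_ray (hb : LipschitzWith 1 b) (hε : 0 < ε) (hgs : GeodesicSpaceWrt (distFun X))
    {η : ℝ → X} (hη : IsGeodesicRayWrt (distFun X) η) {c : ℝ}
    (hgrow : ∀ u, 0 ≤ u → c + u ≤ b (η u)) : CauchyWrt (confDist b ε) (fun k : ℕ => η k) := by
  have hlim : Tendsto (fun k : ℕ => exp (-ε * (c + k)) / ε) atTop (𝓝 0) := by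
    have : Tendsto (fun k : ℕ => -ε * (c + k)) atTop atBot :=
      (tendsto_const_mul_atBot_of_neg (neg_lt_zero.2 hε)).2
        (tendsto_atTop_add_const_left _ c tendsto_natCast_atTop_atTop)
    simpa using (tendsto_exp_atBot.comp this).div_const ε
  intro θ hθ
  obtain ⟨N, hN⟩ := eventually_atTop.1 (hlim.eventually (gt_mem_nhds hθ))
  refine ⟨N, fun k hk l hl => ?_⟩
  rcases le_total k l with h | h
  · exact (confDist_ray_le hb hε hη hgrow (Nat.cast_nonneg k) (Nat.cast_le.2 h)).trans_lt (hN k hk)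
  · rw [confDist_comm hgs]
    exact (confDist_ray_le hb hε hη hgrow (Nat.cast_nonneg l) (Nat.cast_le.2 h)).trans_lt (hN l hl)

lemma not_convWrt_ray (hb : LipschitzWith 1 b) (hε : 0 < ε) (hgs : GeodesicSpaceWrt (distFun X))
    {η : ℝ → X} (hη : IsGeodesicRayWrt (distFun X) η) :
    ¬ ConvWrt (confDist b ε) (fun k : ℕ => η k) := by
  rintro ⟨y, hy⟩
  have hc : 0 < min 1 ε * exp (-ε * b y) / (2 * ε) := by
    have := lt_min one_pos hε
    positivity
  have hfar : ∀ᶠ k : ℕ in atTop, min 1 ε * exp (-ε * b y) / (2 * ε) ≤ confDist b ε (η k) y := by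
    filter_upwards [tendsto_natCast_atTop_atTop.eventually_ge_atTop (dist (η 0) y + 1)] with k hk
    have hk0 : dist (η 0) (η k) = k := by
      rw [hη.dist_eq le_rfl (Nat.cast_nonneg k), zero_sub, abs_neg, Nat.abs_cast]
    have hd : 1 ≤ dist y (η k) := by linarith [dist_triangle (η 0) y (η k)]
    rw [confDist_comm hgs]
    refine le_trans ?_ (le_confDist hb hε hgs y (η k))
    gcongr
    exact le_mul_of_one_le_right hε.le hd
  obtain ⟨k, hk₁, hk₂⟩ := ((hy.eventually (gt_mem_nhds hc)).and hfar).exists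
  linarith

lemma confDist_le_of_escapeRay (hb : LipschitzWith 1 b) (hδ : 0 ≤ δ) (hε : 0 < ε)
    (hgs : GeodesicSpaceWrt (distFun X)) {x : X} {η : ℝ → X} (hη : IsGeodesicRayWrt (distFun X) η)
    (hx : dist x (η 0) ≤ K + 1) (hgrow : ∀ u, 0 ≤ u → (b (η 0) - 2 * δ) + u ≤ b (η u)) {t : ℝ}
    (ht : 0 ≤ t) : confDist b ε x (η t) ≤ 3 * exp (ε * (K + 1 + 2 * δ)) * exp (-ε * b x) / ε := by
  have hbη := hb.le_add_dist x (η 0)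
  have h₁ : confDist b ε x (η 0) ≤ 2 * exp (ε * (K + 1 + 2 * δ)) * exp (-ε * b x) / ε := by
    refine (confDist_le_exp hb hε hgs x (η 0)).trans ?_
    gcongr
    nlinarith
  have h₂ : confDist b ε (η 0) (η t) ≤ exp (ε * (K + 1 + 2 * δ)) * exp (-ε * b x) / ε := by
    refine (confDist_ray_le hb hε hη hgrow le_rfl ht).trans ?_
    rw [← exp_add]
    gcongr
    nlinarith
  calc confDist b ε x (η t) ≤ confDist b ε x (η 0) + confDist b ε (η 0) (η t) :=
        confDist_triangle hb hgs _ _ _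
    _ ≤ _ := add_le_add h₁ h₂
    _ = _ := by ring

end BoundaryOfUniformization

namespace IsUniformizingFun

open Real

variable [MetricSpace X] {δ K ε : ℝ} {b : X → ℝ}

lemma exists_cauchyWrt_not_convWrt (hb : IsUniformizingFun δ K b) (hδ : 0 ≤ δ) (hε : 0 < ε)
    (hgs : GeodesicSpaceWrt (distFun X)) (x : X) :
    ∃ (u : ℕ → X) (r : ℝ), CauchyWrt (confDist b ε) u ∧ ¬ ConvWrt (confDist b ε) u ∧
      Tendsto (fun n => confDist b ε x (u n)) atTop (𝓝 r) ∧
      r ≤ 3 * exp (ε * (K + 1 + 2 * δ)) * exp (-ε * b x) / ε := by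
  obtain ⟨η, hη, hx, hgrow⟩ := hb.exists_escapeRay x
  have hL := hb.lipschitzWith
  have hgrow' : ∀ u, 0 ≤ u → (b (η 0) - 2 * δ) + u ≤ b (η u) := fun u hu => by
    linarith [hgrow u hu]
  have hcau := cauchyWrt_ray hL hε hgs hη hgrow'
  have hcs : CauchySeq fun k : ℕ => confDist b ε x (η k) :=
    Metric.cauchySeq_iff.2 fun θ hθ => by
      obtain ⟨N, hN⟩ := hcau θ hθ
      exact ⟨N, fun m hm n hn => (abs_confDist_sub_le hL hgs x _ _).trans_lt (hN m hm n hn)⟩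
  obtain ⟨r, hr⟩ := cauchySeq_tendsto_of_complete hcs
  exact ⟨_, r, hcau, not_convWrt_ray hL hε hgs hη, hr, le_of_tendsto hr (Eventually.of_forall
    fun k => confDist_le_of_escapeRay hL hδ hε hgs hη hx hgrow' (Nat.cast_nonneg k))⟩

lemma bdryDistWrt_le (hb : IsUniformizingFun δ K b) (hδ : 0 ≤ δ) (hε : 0 < ε)
    (hgs : GeodesicSpaceWrt (distFun X)) (x : X) :
    bdryDistWrt (confDist b ε) x ≤ 3 * exp (ε * (K + 1 + 2 * δ)) * exp (-ε * b x) / ε := by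
  obtain ⟨u, r, hu, hnc, hr, hle⟩ := hb.exists_cauchyWrt_not_convWrt hδ hε hgs x
  exact (Paper.bdryDistWrt_le (confDist_nonneg b ε) hu hnc hr).trans hle

lemma le_bdryDistWrt [ProperSpace X] (hb : IsUniformizingFun δ K b) (hδ : 0 ≤ δ) (hε : 0 < ε)
    (hgs : GeodesicSpaceWrt (distFun X)) (x : X) :
    exp (-ε * b x) / (2 * ε) ≤ bdryDistWrt (confDist b ε) x := by
  obtain ⟨u, r, hu, hnc, hr, -⟩ := hb.exists_cauchyWrt_not_convWrt hδ hε hgs x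
  refine Paper.le_bdryDistWrt hu hnc hr fun v hv hvnc => ?_
  filter_upwards [eventually_le_dist_of_not_convWrt hb.lipschitzWith hε hgs hv hvnc x (1 / ε)]
    with n hn
  have hmin : min 1 (ε * dist x (v n)) = 1 :=
    min_eq_left (by rwa [div_le_iff₀' hε] at hn)
  simpa [hmin] using le_confDist hb.lipschitzWith hε hgs x (v n)

end IsUniformizingFun

section BoundaryLipschitz

open Real

def boundaryRadius (δ K ε : ℝ) : ℝ := exp (-ε * (K + 1 + 2 * δ)) / 24

def boundaryLipConst (δ K M ε ε' : ℝ) : ℝ :=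
  48 * M * (ε' / ε) * exp (ε' / (2 * ε) + (1 / 4 + ε * (K + 1 + 4 * δ)))

lemma boundaryRadius_pos (δ K ε : ℝ) : 0 < boundaryRadius δ K ε := by
  unfold boundaryRadius
  positivity

lemma boundaryRadius_lt_one {δ K ε : ℝ} (hδ : 0 ≤ δ) (hK : 0 ≤ K) (hε : 0 < ε) :
    boundaryRadius δ K ε < 1 := by
  have : exp (-ε * (K + 1 + 2 * δ)) ≤ 1 := exp_le_one_iff.2 (by nlinarith)
  unfold boundaryRadius
  linarith

variable [MetricSpace X] {δ K M ε ε' : ℝ} {b b' : X → ℝ}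

namespace IsUniformizingFun

lemma le_confDist (hb : IsUniformizingFun δ K b) (hε : 0 < ε) (hM : 0 < M)
    (hgh : IsGHDensityWrt (distFun X) M (uniformizationDensity b ε))
    (hgs : GeodesicSpaceWrt (distFun X)) (x y : X) :
    min 1 (ε * dist x y) * exp (-ε * (gromovProdAt b x y + 2 * δ)) / (4 * M * ε) ≤
      confDist b ε x y := by
  obtain ⟨γ, hγ⟩ := hgs x y
  obtain ⟨t₀, ht₀, hlow⟩ := hb.exists_le_gromovProdAt x y γ hγ
  refine le_trans (div_le_div_of_nonneg_right (mul_le_mul_of_nonneg_left ?_ ?_) (by positivity))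
    (le_confDist_of_isGH hb.lipschitzWith hε hM hgh hγ ht₀)
  · exact exp_le_exp.2 (by nlinarith)
  · exact le_min zero_le_one (by positivity)

lemma mul_exp_le_confDist (hb : IsUniformizingFun δ K b) (hε : 0 < ε) (hM : 0 < M)
    (hgh : IsGHDensityWrt (distFun X) M (uniformizationDensity b ε))
    (hgs : GeodesicSpaceWrt (distFun X)) {r : ℝ} {w x y : X} (hr : dist w x + dist w y ≤ r)
    (hεr : ε * r ≤ 1) :
    dist x y * exp (-ε * (r / 2 + 2 * δ)) * exp (-ε * b w) / (4 * M) ≤ confDist b ε x y := by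
  have hxy : ε * dist x y ≤ 1 := by nlinarith [dist_triangle_left x y w]
  refine le_trans ?_ (hb.le_confDist hε hM hgh hgs x y)
  rw [min_eq_right hxy]
  calc dist x y * exp (-ε * (r / 2 + 2 * δ)) * exp (-ε * b w) / (4 * M)
      = dist x y * exp (-ε * (r / 2 + 2 * δ) + -ε * b w) / (4 * M) := by rw [exp_add]; ring
    _ ≤ dist x y * exp (-ε * (gromovProdAt b x y + 2 * δ)) / (4 * M) := by
        gcongr
        nlinarith [gromovProdAt_le hb.lipschitzWith w x y]
    _ = ε * dist x y * exp (-ε * (gromovProdAt b x y + 2 * δ)) / (4 * M * ε) := by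
        field_simp

lemma mul_dist_lt_of_confDist_lt (hb : IsUniformizingFun δ K b) (hδ : 0 ≤ δ) (hε : 0 < ε)
    (hgs : GeodesicSpaceWrt (distFun X)) {x y : X}
    (h : confDist b ε y x < boundaryRadius δ K ε * bdryDistWrt (confDist b ε) x) :
    ε * dist x y < 1 / 4 := by
  have hup := hb.bdryDistWrt_le hδ hε hgs x
  have hlow := Paper.le_confDist (ε := ε) hb.lipschitzWith hε hgs x y
  rw [confDist_comm hgs] at h
  have hbd : boundaryRadius δ K ε * bdryDistWrt (confDist b ε) x ≤ exp (-ε * b x) / (8 * ε) := by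
    calc boundaryRadius δ K ε * bdryDistWrt (confDist b ε) x
        ≤ boundaryRadius δ K ε * (3 * exp (ε * (K + 1 + 2 * δ)) * exp (-ε * b x) / ε) :=
          mul_le_mul_of_nonneg_left hup (boundaryRadius_pos δ K ε).le
      _ = exp (-ε * b x) / (8 * ε) := by
          rw [boundaryRadius, show -ε * (K + 1 + 2 * δ) = -(ε * (K + 1 + 2 * δ)) by ring, exp_neg]
          field_simp
          ring
  have hmin : min 1 (ε * dist x y) < 1 / 4 := by
    have := hlow.trans_lt (h.trans_le hbd)
    rw [div_lt_div_iff₀ (by positivity) (by positivity)] at this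
    by_contra! hm
    nlinarith [mul_le_mul_of_nonneg_right hm (mul_pos (exp_pos (-ε * b x)) hε).le]
  exact lt_of_not_ge fun hcon => hmin.not_ge (le_min (by norm_num) hcon)


lemma confDist_div_bdryDistWrt_le [ProperSpace X] (hb : IsUniformizingFun δ K b) (hδ : 0 ≤ δ)
    (hε : 0 < ε) (hgs : GeodesicSpaceWrt (distFun X)) {r : ℝ} {x y z : X}
    (hr : dist x y + dist x z ≤ r) :
    confDist b ε y z / bdryDistWrt (confDist b ε) x ≤ 4 * ε * exp (ε * r) * dist y z := by
  have hlow := hb.le_bdryDistWrt hδ hε hgs x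
  have hpos : 0 < bdryDistWrt (confDist b ε) x := lt_of_lt_of_le (by positivity) hlow
  rw [div_le_iff₀ hpos]
  calc confDist b ε y z ≤ 2 * dist y z * exp (ε * (dist x y + dist x z)) * exp (-ε * b x) :=
        confDist_le_mul_exp hb.lipschitzWith hε hgs x y z
    _ ≤ 2 * dist y z * exp (ε * r) * exp (-ε * b x) := by gcongr
    _ = 4 * ε * exp (ε * r) * dist y z * (exp (-ε * b x) / (2 * ε)) := by field_simp; ring
    _ ≤ 4 * ε * exp (ε * r) * dist y z * bdryDistWrt (confDist b ε) x := by gcongr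

lemma mul_dist_le_confDist_div_bdryDistWrt [ProperSpace X] (hb : IsUniformizingFun δ K b)
    (hδ : 0 ≤ δ) (hε : 0 < ε) (hM : 0 < M)
    (hgh : IsGHDensityWrt (distFun X) M (uniformizationDensity b ε))
    (hgs : GeodesicSpaceWrt (distFun X)) {r : ℝ} {x y z : X} (hr : dist x y + dist x z ≤ r)
    (hεr : ε * r ≤ 1) :
    ε * exp (-ε * (r / 2 + 2 * δ + (K + 1 + 2 * δ))) * dist y z / (12 * M) ≤
      confDist b ε y z / bdryDistWrt (confDist b ε) x := by
  have hup := hb.bdryDistWrt_le hδ hε hgs x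
  have hpos : 0 < bdryDistWrt (confDist b ε) x :=
    lt_of_lt_of_le (by positivity) (hb.le_bdryDistWrt hδ hε hgs x)
  rw [le_div_iff₀ hpos]
  calc ε * exp (-ε * (r / 2 + 2 * δ + (K + 1 + 2 * δ))) * dist y z / (12 * M) *
        bdryDistWrt (confDist b ε) x
      ≤ ε * exp (-ε * (r / 2 + 2 * δ + (K + 1 + 2 * δ))) * dist y z / (12 * M) *
        (3 * exp (ε * (K + 1 + 2 * δ)) * exp (-ε * b x) / ε) := by gcongr
    _ = dist y z * exp (-ε * (r / 2 + 2 * δ)) * exp (-ε * b x) / (4 * M) := by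
        rw [show -ε * (r / 2 + 2 * δ + (K + 1 + 2 * δ)) =
          -ε * (r / 2 + 2 * δ) + -(ε * (K + 1 + 2 * δ)) by ring, exp_add, exp_neg]
        field_simp
        ring
    _ ≤ confDist b ε y z := hb.mul_exp_le_confDist hε hM hgh hgs hr hεr

lemma partialLipschitzWrt_id [ProperSpace X] (hb : IsUniformizingFun δ K b)
    (hb' : IsUniformizingFun δ K b') (hδ : 0 ≤ δ) (hε : 0 < ε) (hε' : 0 < ε') (hM : 0 < M)
    (hgh : IsGHDensityWrt (distFun X) M (uniformizationDensity b ε))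
    (hgs : GeodesicSpaceWrt (distFun X)) :
    PartialLipschitzWrt (confDist b ε) (confDist b' ε') (boundaryLipConst δ K M ε ε')
      (boundaryRadius δ K ε) id := by
  intro x y z hy hz
  have hr : dist x y + dist x z ≤ 1 / (2 * ε) := by
    have := hb.mul_dist_lt_of_confDist_lt hδ hε hgs hy
    have := hb.mul_dist_lt_of_confDist_lt hδ hε hgs hz
    rw [le_div_iff₀ (by positivity)]
    linarith
  have hεr : ε * (1 / (2 * ε)) ≤ 1 := by rw [mul_one_div, div_le_one (by positivity)]; linarith
  have hexp : -ε * (1 / (2 * ε) / 2 + 2 * δ + (K + 1 + 2 * δ)) =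
      -(1 / 4 + ε * (K + 1 + 4 * δ)) := by field_simp; ring
  calc confDist b' ε' (id y) (id z) / bdryDistWrt (confDist b' ε') (id x)
      ≤ 4 * ε' * exp (ε' * (1 / (2 * ε))) * dist y z :=
        hb'.confDist_div_bdryDistWrt_le hδ hε' hgs hr
    _ = boundaryLipConst δ K M ε ε' *
          (ε * exp (-ε * (1 / (2 * ε) / 2 + 2 * δ + (K + 1 + 2 * δ))) * dist y z / (12 * M)) := by
        rw [hexp, boundaryLipConst, exp_add, exp_neg]
        field_simp
        ring
    _ ≤ boundaryLipConst δ K M ε ε' * (confDist b ε y z / bdryDistWrt (confDist b ε) x) := by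
        have : 0 ≤ boundaryLipConst δ K M ε ε' := by unfold boundaryLipConst; positivity
        exact mul_le_mul_of_nonneg_left
          (hb.mul_dist_le_confDist_div_bdryDistWrt hδ hε hM hgh hgs hr hεr) this

end IsUniformizingFun

end BoundaryLipschitz

section FourPoint

open Real

lemma mul_add_le_add_max {a A S : ℝ} (ha : 0 < a) (hneg : A < -1 → S ≤ 0)
    (hpos : 1 < A → 0 ≤ S) : a * A + S ≤ a + a⁻¹ + max (a * (A + S)) (a⁻¹ * (A + S)) := by
  set c := a⁻¹
  have hac : a * c = 1 := mul_inv_cancel₀ ha.ne'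
  have hc0 : 0 < c := inv_pos.2 ha
  have h2 : 2 ≤ a + c := by nlinarith [sq_nonneg (a - c)]
  rcases le_total a 1 with ha1 | ha1 <;> rcases le_total (A + S) 0 with hX | hX
  · refine le_trans ?_ (add_le_add le_rfl (le_max_left _ _))
    rcases le_or_gt S 0 with hS | hS
    · nlinarith
    · have : -1 ≤ A := not_lt.1 fun h => by linarith [hneg h]
      nlinarith
  · refine le_trans ?_ (add_le_add le_rfl (le_max_right _ _))
    have hc1 : 1 ≤ c := by nlinarith
    rcases le_or_gt 0 A with hA | hA
    · nlinarith
    · have : -1 ≤ A := not_lt.1 fun h => by linarith [hneg h]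
      nlinarith
  · refine le_trans ?_ (add_le_add le_rfl (le_max_right _ _))
    have hc1 : c ≤ 1 := by nlinarith
    rcases le_or_gt A 0 with hA | hA
    · nlinarith
    · have : A ≤ 1 := not_lt.1 fun h => by linarith [hpos h]
      nlinarith
  · refine le_trans ?_ (add_le_add le_rfl (le_max_left _ _))
    rcases le_or_gt 0 S with hS | hS
    · nlinarith
    · have : A ≤ 1 := not_lt.1 fun h => by linarith [hpos h]
      nlinarith

lemma exp_min_zero_log {t : ℝ} (ht : 0 < t) : exp (min 0 (log t)) = min 1 t := by
  rw [exp_monotone.map_min, exp_zero, exp_log ht]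

lemma min_zero_log_eq_zero {t : ℝ} (ht : 1 ≤ t) : min 0 (log t) = 0 :=
  min_eq_left (log_nonneg ht)

lemma abs_min_zero_log_mul_sub_le {ε ε' d : ℝ} (hε : 0 < ε) (hε' : 0 < ε') (hd : 0 < d) :
    |min 0 (log (ε' * d)) - min 0 (log (ε * d))| ≤ |log (ε' / ε)| := by
  refine (abs_min_sub_min_le_max _ _ _ _).trans ?_
  rw [sub_self, abs_zero, log_mul hε'.ne' hd.ne', log_mul hε.ne' hd.ne', log_div hε'.ne' hε.ne']
  simp

def fourPointExponent (ε p q a c : ℝ) : ℝ :=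
  ε / 2 * (p + q - a - c) +
    (min 0 (log (ε * p)) + min 0 (log (ε * q)) - min 0 (log (ε * a)) - min 0 (log (ε * c)))

lemma fourPointExponent_le {ε ε' p q a c : ℝ} (hε : 0 < ε) (hε' : 0 < ε') (hp : 0 < p)
    (hq : 0 < q) (ha : 0 < a) (hc : 0 < c) (hqp : q ≤ p + a + c) (hpq : p ≤ q + a + c)
    (hcp : c ≤ p + q + a) (hap : a ≤ p + q + c) :
    fourPointExponent ε' p q a c ≤ 4 * |log (ε' / ε)| + (ε' / ε + (ε' / ε)⁻¹) +
      max (ε' / ε * fourPointExponent ε p q a c) ((ε' / ε)⁻¹ * fourPointExponent ε p q a c) := by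
  have hneg : ε / 2 * (p + q - a - c) < -1 →
      min 0 (log (ε * p)) + min 0 (log (ε * q)) - min 0 (log (ε * a)) -
        min 0 (log (ε * c)) ≤ 0 := fun h => by
    rw [min_zero_log_eq_zero (t := ε * a), min_zero_log_eq_zero (t := ε * c)]
    · linarith [min_le_left 0 (log (ε * p)), min_le_left 0 (log (ε * q))]
    all_goals nlinarith
  have hpos : 1 < ε / 2 * (p + q - a - c) →
      0 ≤ min 0 (log (ε * p)) + min 0 (log (ε * q)) - min 0 (log (ε * a)) -
        min 0 (log (ε * c)) := fun h => by
    rw [min_zero_log_eq_zero (t := ε * p), min_zero_log_eq_zero (t := ε * q)]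
    · linarith [min_le_left 0 (log (ε * a)), min_le_left 0 (log (ε * c))]
    all_goals nlinarith
  have hcore := mul_add_le_add_max (div_pos hε' hε) hneg hpos
  have hA : ε' / ε * (ε / 2 * (p + q - a - c)) = ε' / 2 * (p + q - a - c) := by
    field_simp
  have := abs_le.1 (abs_min_zero_log_mul_sub_le hε hε' hp)
  have := abs_le.1 (abs_min_zero_log_mul_sub_le hε hε' hq)
  have := abs_le.1 (abs_min_zero_log_mul_sub_le hε hε' ha)
  have := abs_le.1 (abs_min_zero_log_mul_sub_le hε hε' hc)
  unfold fourPointExponent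
  linarith

end FourPoint

section CrossRatio

open Real

lemma abs_log_crossRatioWrt_sub_le {e h : X → X → ℝ} {c₁ c₂ : ℝ} (hc₁ : 0 < c₁)
    (hlow : ∀ u v, u ≠ v → c₁ * exp (h u v) ≤ e u v)
    (hup : ∀ u v, u ≠ v → e u v ≤ c₂ * exp (h u v)) {x y z w : X} (hxy : x ≠ y) (hxz : x ≠ z)
    (hyw : y ≠ w) (hzw : z ≠ w) :
    |log (crossRatioWrt e x y z w) - (h x z + h y w - h x y - h z w)| ≤ 2 * log (c₂ / c₁) := by
  have key : ∀ u v, u ≠ v → 0 < e u v ∧ 0 < c₂ ∧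
      log c₁ + h u v ≤ log (e u v) ∧ log (e u v) ≤ log c₂ + h u v := fun u v huv => by
    have hl := hlow u v huv
    have hu := hup u v huv
    have he : 0 < e u v := (mul_pos hc₁ (exp_pos _)).trans_le hl
    have hc₂ : 0 < c₂ := pos_of_mul_pos_left (he.trans_le hu) (exp_pos _).le
    refine ⟨he, hc₂, ?_, ?_⟩
    · simpa [log_mul hc₁.ne' (exp_pos _).ne'] using log_le_log (by positivity) hl
    · simpa [log_mul hc₂.ne' (exp_pos _).ne'] using log_le_log he hu
  obtain ⟨h₁, hc₂, h₁l, h₁u⟩ := key x z hxz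
  obtain ⟨h₂, -, h₂l, h₂u⟩ := key y w hyw
  obtain ⟨h₃, -, h₃l, h₃u⟩ := key x y hxy
  obtain ⟨h₄, -, h₄l, h₄u⟩ := key z w hzw
  rw [crossRatioWrt, log_div (by positivity) (by positivity), log_mul h₁.ne' h₂.ne',
    log_mul h₃.ne' h₄.ne', log_div hc₂.ne' hc₁.ne', abs_le]
  constructor <;> linarith

lemma le_exp_mul_max_rpow {t t' r κ κ' c H H' : ℝ} (ht : 0 < t) (ht' : 0 < t') (hr : 0 < r)
    (hκ : 0 ≤ κ) (h₁ : log t' ≤ κ' + H') (h₂ : H' ≤ c + max (r * H) (r⁻¹ * H))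
    (h₃ : H ≤ log t + κ) :
    t' ≤ exp (κ' + c + (r + r⁻¹) * κ) * max (t ^ r) (t ^ r⁻¹) := by
  have hmax : max (r * H) (r⁻¹ * H) ≤ (r + r⁻¹) * κ + max (r * log t) (r⁻¹ * log t) := by
    have := inv_pos.2 hr
    refine max_le ?_ ?_
    · nlinarith [le_max_left (r * log t) (r⁻¹ * log t)]
    · nlinarith [le_max_right (r * log t) (r⁻¹ * log t)]
  rw [rpow_def_of_pos ht, rpow_def_of_pos ht, ← exp_monotone.map_max, ← exp_add,
    ← exp_log ht']
  refine exp_le_exp.2 ?_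
  rw [mul_comm (log t) r, mul_comm (log t) r⁻¹]
  linarith

def crossRatioConst (δ M ε : ℝ) : ℝ := 2 * log (8 * M * exp (2 * ε * δ))

def quasiMobiusConst (δ M ε ε' : ℝ) : ℝ :=
  exp (crossRatioConst δ M ε' + (4 * |log (ε' / ε)| + (ε' / ε + (ε' / ε)⁻¹)) +
    (ε' / ε + (ε' / ε)⁻¹) * crossRatioConst δ M ε)

variable [MetricSpace X] {δ K M ε ε' : ℝ} {b b' : X → ℝ}

def confModel (b : X → ℝ) (ε : ℝ) (x y : X) : ℝ :=
  -ε * gromovProdAt b x y + min 0 (log (ε * dist x y))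

lemma exp_confModel (hε : 0 < ε) {x y : X} (hxy : x ≠ y) :
    exp (confModel b ε x y) = exp (-ε * gromovProdAt b x y) * min 1 (ε * dist x y) := by
  rw [confModel, exp_add, exp_min_zero_log (mul_pos hε (dist_pos.2 hxy))]

lemma crossRatioConst_nonneg (hδ : 0 ≤ δ) (hε : 0 < ε) (hM : 1 ≤ M) : 0 ≤ crossRatioConst δ M ε :=
  mul_nonneg zero_le_two (log_nonneg (by nlinarith [one_le_exp (by positivity : 0 ≤ 2 * ε * δ)]))

lemma IsUniformizingFun.abs_log_crossRatioWrt_sub_le (hb : IsUniformizingFun δ K b)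
    (hε : 0 < ε) (hM : 0 < M) (hgh : IsGHDensityWrt (distFun X) M (uniformizationDensity b ε))
    (hgs : GeodesicSpaceWrt (distFun X)) {x y z w : X} (hxy : x ≠ y) (hxz : x ≠ z)
    (hyw : y ≠ w) (hzw : z ≠ w) :
    |log (crossRatioWrt (confDist b ε) x y z w) -
      fourPointExponent ε (dist x z) (dist y w) (dist x y) (dist z w)| ≤
      crossRatioConst δ M ε := by
  have hsum : confModel b ε x z + confModel b ε y w - confModel b ε x y - confModel b ε z w =
      fourPointExponent ε (dist x z) (dist y w) (dist x y) (dist z w) := by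
    simp only [confModel, gromovProdAt, fourPointExponent]
    ring
  have hratio : 2 / ε / (exp (-(2 * ε * δ)) / (4 * M * ε)) = 8 * M * exp (2 * ε * δ) := by
    rw [exp_neg]
    field_simp
    ring
  have := Paper.abs_log_crossRatioWrt_sub_le (e := confDist b ε) (h := confModel b ε)
    (c₁ := exp (-(2 * ε * δ)) / (4 * M * ε)) (c₂ := 2 / ε) (by positivity)
    (fun u v huv => by
      refine le_trans (le_of_eq ?_) (hb.le_confDist hε hM hgh hgs u v)
      rw [exp_confModel hε huv, show -ε * (gromovProdAt b u v + 2 * δ) =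
        -ε * gromovProdAt b u v + -(2 * ε * δ) by ring, exp_add]
      ring)
    (fun u v huv => by
      refine (confDist_le hb.lipschitzWith hε hgs u v).trans (le_of_eq ?_)
      rw [exp_confModel hε huv]
      ring) hxy hxz hyw hzw
  rwa [hsum, hratio] at this

lemma crossRatioWrt_confDist_pos (hb : LipschitzWith 1 b) (hε : 0 < ε)
    (hgs : GeodesicSpaceWrt (distFun X)) {x y z w : X} (hxy : x ≠ y) (hxz : x ≠ z) (hyw : y ≠ w)
    (hzw : z ≠ w) : 0 < crossRatioWrt (confDist b ε) x y z w := by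
  have := confDist_pos hb hε hgs hxy
  have := confDist_pos hb hε hgs hxz
  have := confDist_pos hb hε hgs hyw
  have := confDist_pos hb hε hgs hzw
  unfold crossRatioWrt
  positivity

lemma IsUniformizingFun.quasiMobiusWrt_id (hb : IsUniformizingFun δ K b)
    (hb' : IsUniformizingFun δ K b') (hδ : 0 ≤ δ) (hε : 0 < ε) (hε' : 0 < ε') (hM : 1 ≤ M)
    (hgh : IsGHDensityWrt (distFun X) M (uniformizationDensity b ε))
    (hgh' : IsGHDensityWrt (distFun X) M (uniformizationDensity b' ε'))
    (hgs : GeodesicSpaceWrt (distFun X)) :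
    QuasiMobiusWrt (confDist b ε) (confDist b' ε')
      (fun t => quasiMobiusConst δ M ε ε' * max (t ^ (ε' / ε)) (t ^ (ε / ε'))) id := by
  intro x y z w hxy hxz _ _ hyw hzw
  dsimp only [id]
  have hM0 : 0 < M := by linarith
  have hcr := abs_le.1 (hb.abs_log_crossRatioWrt_sub_le hε hM0 hgh hgs hxy hxz hyw hzw)
  have hcr' := abs_le.1 (hb'.abs_log_crossRatioWrt_sub_le hε' hM0 hgh' hgs hxy hxz hyw hzw)
  have hfour := fourPointExponent_le hε hε' (dist_pos.2 hxz) (dist_pos.2 hyw) (dist_pos.2 hxy)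
    (dist_pos.2 hzw) (by linarith [dist_triangle y x w, dist_triangle x z w, dist_comm x y])
    (by linarith [dist_triangle x y z, dist_triangle y w z, dist_comm w z])
    (by linarith [dist_triangle z x w, dist_triangle x y w, dist_comm x z])
    (by linarith [dist_triangle x z y, dist_triangle z w y, dist_comm y w])
  rw [← inv_div ε' ε]
  exact le_exp_mul_max_rpow (crossRatioWrt_confDist_pos hb.lipschitzWith hε hgs hxy hxz hyw hzw)
    (crossRatioWrt_confDist_pos hb'.lipschitzWith hε' hgs hxy hxz hyw hzw) (div_pos hε' hε)
    (crossRatioConst_nonneg hδ hε hM) (by linarith) hfour (by linarith)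

end CrossRatio

/-- For a proper geodesic `δ`-hyperbolic space `X` and `b, b' ∈ 𝔅̂(X)`
with `X` `K`-roughly starlike from both basepoints, and `ε, ε' > 0` such that `ρ_{ε,b}` and
`ρ_{ε',b'}` are GH-densities with the same constant `M`, the identity map
`X_{ε,b} → X_{ε',b'}` is `∂`-biLipschitz with data `(L, λ)` and is `η`-quasimöbius with
`η(t) = C·max{t^{ε'/ε}, t^{ε/ε'}}`, where `L`, `λ`, `C` depend only on `δ, K, ε, ε', M`. -/
theorem statement3 (δ K ε ε' M : ℝ) (hδ : 0 ≤ δ) (hK : 0 ≤ K) (hε : 0 < ε) (hε' : 0 < ε')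
    (hM : 1 ≤ M) :
    ∃ L lam C : ℝ, 1 ≤ L ∧ 0 < lam ∧ lam < 1 ∧ 0 < C ∧
      ∀ (X : Type*) [MetricSpace X] [ProperSpace X],
        GeodesicSpaceWrt (distFun X) → DeltaHyperbolicWrt (distFun X) δ →
        ∀ b b' : X → ℝ,
          BhatStarlike (distFun X) K b → BhatStarlike (distFun X) K b' →
          IsGHDensityWrt (distFun X) M (uniformizationDensity b ε) →
          IsGHDensityWrt (distFun X) M (uniformizationDensity b' ε') →
          PartialBiLipschitzWrt (confDistWrt (distFun X) (uniformizationDensity b ε))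
            (confDistWrt (distFun X) (uniformizationDensity b' ε')) L lam id id ∧
          QuasiMobiusWrt (confDistWrt (distFun X) (uniformizationDensity b ε))
            (confDistWrt (distFun X) (uniformizationDensity b' ε'))
            (fun t => C * max (t ^ (ε' / ε)) (t ^ (ε / ε'))) id := by
  have hM0 : 0 < M := by linarith
  refine ⟨max 1 (max (boundaryLipConst δ K M ε ε') (boundaryLipConst δ K M ε' ε)),
    min (boundaryRadius δ K ε) (boundaryRadius δ K ε'), quasiMobiusConst δ M ε ε',
    le_max_left _ _, lt_min (boundaryRadius_pos δ K ε) (boundaryRadius_pos δ K ε'),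
    (min_le_left _ _).trans_lt (boundaryRadius_lt_one hδ hK hε),
    Real.exp_pos _, fun X _ _ hgs hhyp b b' hb hb' hgh hgh' => ?_⟩
  have hu := hb.isUniformizingFun hgs hhyp hδ
  have hu' := hb'.isUniformizingFun hgs hhyp hδ
  refine ⟨⟨le_max_left _ _, fun _ => rfl, fun _ => rfl, ?_, ?_⟩,
    hu.quasiMobiusWrt_id hu' hδ hε hε' hM hgh hgh' hgs⟩
  · exact (hu.partialLipschitzWrt_id hu' hδ hε hε' hM0 hgh hgs).mono (confDist_nonneg b ε)
      ((le_max_left _ _).trans (le_max_right _ _)) (min_le_left _ _)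
  · exact (hu'.partialLipschitzWrt_id hu hδ hε' hε hM0 hgh' hgs).mono (confDist_nonneg b' ε')
      ((le_max_right _ _).trans (le_max_right _ _)) (min_le_right _ _)

end Paper

end
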